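/- arXiv:2504.19405 — 10 statements merged into one kernel-verified Lean document; each statement's English description precedes it below -/
import Mathlib

section
/- Let 0 < ρ₀ < ρ₁, z₀ ∈ ℂ, u₀ > 0. Let H : ℝ → ℂ → ℂ be such that for every u ≥ u₀ the function z ↦ H(u,z) is analytic on the open disk D₁ = {z : |z − z₀| < ρ₁}, and let h_s : ℂ → ℂ (s = 0, 1, 2, …) be analytic on the open annulus R = {z : ρ₀ < |z − z₀| < ρ₁}. Suppose H possesses the uniform asymptotic expansion H(u,z) ∼ Σ_{s=0}^{∞} h_s(z)/u^s on R, meaning: for every n ∈ ℕ there exist constants C_n > 0 and U_n ≥ u₀ such that |H(u,z) − Σ_{s=0}^{n−1} h_s(z) u^{−s}| ≤ C_n u^{−n} for all u ≥ U_n and all z ∈ R. Then there exist functions g_s analytic on all of D₁ with g_s(z) = h_s(z) for every z ∈ R, and the expansion holds on all of D₁ in the sense: for every n ∈ ℕ and every ρ with ρ₀ < ρ < ρ₁ there exist C > 0 and U ≥ u₀ such that |H(u,z) − Σ_{s=0}^{n−1} g_s(z) u^{−s}| ≤ C u^{−n} for all u ≥ U and all z with |z − z₀| ≤ ρ. -/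
open Metric Filter Finset

/-- The set of hypotheses of Theorem 4.1, packaged as a single predicate. -/
def Hyps (ρ₀ ρ₁ : ℝ) (z₀ : ℂ) (u₀ : ℝ) (H : ℝ → ℂ → ℂ) (h : ℕ → ℂ → ℂ) : Prop :=
  (∀ u : ℝ, u₀ ≤ u → DifferentiableOn ℂ (H u) (Metric.ball z₀ ρ₁)) ∧
  (∀ s : ℕ, DifferentiableOn ℂ (h s)
    {z : ℂ | ρ₀ < ‖z - z₀‖ ∧ ‖z - z₀‖ < ρ₁}) ∧
  (∀ n : ℕ, ∃ C : ℝ, 0 < C ∧ ∃ U : ℝ, u₀ ≤ U ∧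
    ∀ u : ℝ, U ≤ u → ∀ z : ℂ, ρ₀ < ‖z - z₀‖ → ‖z - z₀‖ < ρ₁ →
      ‖H u z - ∑ s ∈ Finset.range n, h s z / (u : ℂ) ^ s‖ ≤ C / u ^ n)

/-- Maximum modulus principle on a disk: a bound on the sphere of radius `ρ` propagates to
the closed ball of radius `ρ`. -/
lemma maxmod {z₀ : ℂ} {ρ ρ₁ : ℝ} (hρpos : 0 < ρ) (hρ₁ : ρ < ρ₁) {f : ℂ → ℂ}
    (hf : DifferentiableOn ℂ f (Metric.ball z₀ ρ₁)) {C : ℝ}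
    (hC : ∀ z ∈ Metric.sphere z₀ ρ, ‖f z‖ ≤ C) :
    ∀ z : ℂ, ‖z - z₀‖ ≤ ρ → ‖f z‖ ≤ C := by
  intro z hz
  have hsub : closure (Metric.ball z₀ ρ) ⊆ Metric.ball z₀ ρ₁ := by
    rw [closure_ball z₀ hρpos.ne']
    exact fun w hw => lt_of_le_of_lt (mem_closedBall.1 hw) hρ₁
  have hd : DiffContOnCl ℂ f (Metric.ball z₀ ρ) :=
    DifferentiableOn.diffContOnCl (hf.mono hsub)
  have hfr : ∀ w ∈ frontier (Metric.ball z₀ ρ), ‖f w‖ ≤ C := by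
    rw [frontier_ball z₀ hρpos.ne']
    exact hC
  have hzc : z ∈ closure (Metric.ball z₀ ρ) := by
    rw [closure_ball z₀ hρpos.ne']
    simpa [Metric.mem_closedBall, dist_eq_norm] using hz
  exact Complex.norm_le_of_forall_mem_frontier_norm_le Metric.isBounded_ball hd hfr hzc

/-- The key construction step: the leading coefficient extends analytically to the disk, and
after subtracting it the same hypotheses hold with all indices shifted by one. -/
lemma step {ρ₀ ρ₁ : ℝ} {z₀ : ℂ} {u₀ : ℝ} (hρ₀ : 0 < ρ₀) (hρ : ρ₀ < ρ₁) (hu₀ : 0 < u₀)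
    {H : ℝ → ℂ → ℂ} {h : ℕ → ℂ → ℂ} (hy : Hyps ρ₀ ρ₁ z₀ u₀ H h) :
    ∃ g₀ : ℂ → ℂ, DifferentiableOn ℂ g₀ (Metric.ball z₀ ρ₁) ∧
      (∀ z : ℂ, ρ₀ < ‖z - z₀‖ → ‖z - z₀‖ < ρ₁ → g₀ z = h 0 z) ∧
      Hyps ρ₀ ρ₁ z₀ u₀ (fun u z => (u : ℂ) * (H u z - g₀ z)) (fun s => h (s + 1)) := by
  obtain ⟨C₁, hC₁, U₁, hU₁, hb₁⟩ := hy.2.2 1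
  have hU₁pos : 0 < U₁ := lt_of_lt_of_le hu₀ hU₁
  -- the sequence of approximants
  set F : ℕ → ℂ → ℂ := fun k z => H (U₁ + k) z with hF
  have hUk : ∀ k : ℕ, U₁ ≤ U₁ + k := fun k => le_add_of_nonneg_right (Nat.cast_nonneg k)
  have hUkpos : ∀ k : ℕ, 0 < U₁ + (k : ℝ) := fun k => lt_of_lt_of_le hU₁pos (hUk k)
  have hFdiff : ∀ k : ℕ, DifferentiableOn ℂ (F k) (Metric.ball z₀ ρ₁) :=
    fun k => hy.1 _ (le_trans hU₁ (hUk k))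
  -- estimate on the annulus
  have est1 : ∀ k : ℕ, ∀ z : ℂ, ρ₀ < ‖z - z₀‖ → ‖z - z₀‖ < ρ₁ →
      ‖F k z - h 0 z‖ ≤ C₁ / (U₁ + k) := by
    intro k z h1 h2
    have := hb₁ (U₁ + k) (hUk k) z h1 h2
    simpa using this
  -- Cauchy-type estimate on disks, via the maximum principle
  have est2 : ∀ j k : ℕ, ∀ ρ : ℝ, ρ₀ < ρ → ρ < ρ₁ → ∀ z : ℂ, ‖z - z₀‖ ≤ ρ →
      ‖F j z - F k z‖ ≤ C₁ / (U₁ + j) + C₁ / (U₁ + k) := by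
    intro j k ρ h1 h2 z hz
    refine maxmod (lt_trans hρ₀ h1) h2 ((hFdiff j).sub (hFdiff k)) (fun w hw => ?_) z hz
    have hwn : ‖w - z₀‖ = ρ := by
      simpa [mem_sphere_iff_norm] using hw
    have e1 := est1 j w (hwn ▸ h1) (hwn ▸ h2)
    have e2 := est1 k w (hwn ▸ h1) (hwn ▸ h2)
    calc ‖F j w - F k w‖ = ‖(F j w - h 0 w) - (F k w - h 0 w)‖ := by ring_nf
      _ ≤ ‖F j w - h 0 w‖ + ‖F k w - h 0 w‖ := norm_sub_le _ _
      _ ≤ C₁ / (U₁ + j) + C₁ / (U₁ + k) := add_le_add e1 e2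
  -- the bounds tend to zero
  have htend0 : Filter.Tendsto (fun k : ℕ => C₁ / (U₁ + k)) Filter.atTop (nhds 0) := by
    apply Filter.Tendsto.div_atTop (tendsto_const_nhds)
    exact Filter.tendsto_atTop_add_const_left _ _ tendsto_natCast_atTop_atTop
  -- choose a good radius for each point of the disk
  have hrz : ∀ z : ℂ, ‖z - z₀‖ < ρ₁ →
      ∃ ρ : ℝ, ρ₀ < ρ ∧ ρ < ρ₁ ∧ ‖z - z₀‖ < ρ := by
    intro z hz
    refine ⟨(max ‖z - z₀‖ ρ₀ + ρ₁) / 2, ?_, ?_, ?_⟩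
    · have : ρ₀ ≤ max ‖z - z₀‖ ρ₀ := le_max_right _ _
      linarith
    · have : max ‖z - z₀‖ ρ₀ < ρ₁ := max_lt hz hρ
      linarith
    · have : ‖z - z₀‖ ≤ max ‖z - z₀‖ ρ₀ := le_max_left _ _
      have h2 : max ‖z - z₀‖ ρ₀ < ρ₁ := max_lt hz hρ
      linarith
  -- the sequence is Cauchy pointwise on the disk
  have hcauchy : ∀ z : ℂ, ‖z - z₀‖ < ρ₁ → CauchySeq (fun k => F k z) := by
    intro z hz
    obtain ⟨ρ, h1, h2, h3⟩ := hrz z hz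
    apply cauchySeq_of_le_tendsto_0 (fun N : ℕ => 2 * (C₁ / (U₁ + N)))
    · intro j k N hNj hNk
      have e := est2 j k ρ h1 h2 z h3.le
      have m1 : C₁ / (U₁ + j) ≤ C₁ / (U₁ + N) :=
        div_le_div_of_nonneg_left hC₁.le (hUkpos N) (by exact_mod_cast add_le_add_right (Nat.cast_le.2 hNj) U₁)
      have m2 : C₁ / (U₁ + k) ≤ C₁ / (U₁ + N) :=
        div_le_div_of_nonneg_left hC₁.le (hUkpos N) (by exact_mod_cast add_le_add_right (Nat.cast_le.2 hNk) U₁)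
      rw [dist_eq_norm]
      linarith
    · simpa using htend0.const_mul 2
  -- the limit function
  set g₀ : ℂ → ℂ := fun z => limUnder Filter.atTop (fun k => F k z) with hg₀
  have tlim : ∀ z : ℂ, ‖z - z₀‖ < ρ₁ →
      Filter.Tendsto (fun k => F k z) Filter.atTop (nhds (g₀ z)) :=
    fun z hz => (hcauchy z hz).tendsto_limUnder
  -- uniform estimate against the limit
  have est3 : ∀ k : ℕ, ∀ ρ : ℝ, ρ₀ < ρ → ρ < ρ₁ → ∀ z : ℂ, ‖z - z₀‖ ≤ ρ →
      ‖g₀ z - F k z‖ ≤ C₁ / (U₁ + k) := by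
    intro k ρ h1 h2 z hz
    have hzball : ‖z - z₀‖ < ρ₁ := lt_of_le_of_lt hz h2
    have t1 : Filter.Tendsto (fun j => ‖F j z - F k z‖) Filter.atTop
        (nhds ‖g₀ z - F k z‖) :=
      (((tlim z hzball).sub_const (F k z)).norm)
    have t2 : Filter.Tendsto (fun j : ℕ => C₁ / (U₁ + j) + C₁ / (U₁ + k)) Filter.atTop
        (nhds (0 + C₁ / (U₁ + k))) := htend0.add_const _
    have := le_of_tendsto_of_tendsto' t1 t2 (fun j => est2 j k ρ h1 h2 z hz)
    simpa using this
  -- agreement with `h 0` on the annulus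
  have heq : ∀ z : ℂ, ρ₀ < ‖z - z₀‖ → ‖z - z₀‖ < ρ₁ → g₀ z = h 0 z := by
    intro z h1 h2
    have t1 : Filter.Tendsto (fun k => F k z) Filter.atTop (nhds (h 0 z)) := by
      rw [← tendsto_sub_nhds_zero_iff]
      exact squeeze_zero_norm (fun k => est1 k z h1 h2) htend0
    exact tendsto_nhds_unique (tlim z h2) t1
  -- locally uniform convergence, hence analyticity of the limit
  have hlocal : TendstoLocallyUniformlyOn F g₀ Filter.atTop (Metric.ball z₀ ρ₁) := by
    rw [Metric.tendstoLocallyUniformlyOn_iff]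
    intro ε hε x hx
    have hxball : ‖x - z₀‖ < ρ₁ := by
      simpa [Metric.mem_ball, dist_eq_norm] using hx
    obtain ⟨ρ, h1, h2, h3⟩ := hrz x hxball
    refine ⟨Metric.closedBall z₀ ρ, ?_, ?_⟩
    · apply mem_nhdsWithin_of_mem_nhds
      exact Metric.closedBall_mem_nhds_of_mem (by simpa [Metric.mem_ball, dist_eq_norm] using h3)
    · have : ∀ᶠ k : ℕ in Filter.atTop, C₁ / (U₁ + k) < ε :=
        htend0.eventually (gt_mem_nhds hε)
      refine this.mono fun k hk y hy => ?_
      have hyρ : ‖y - z₀‖ ≤ ρ := by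
        simpa [Metric.mem_closedBall, dist_eq_norm] using hy
      calc dist (g₀ y) (F k y) = ‖g₀ y - F k y‖ := dist_eq_norm _ _
        _ ≤ C₁ / (U₁ + k) := est3 k ρ h1 h2 y hyρ
        _ < ε := hk
  have gdiff : DifferentiableOn ℂ g₀ (Metric.ball z₀ ρ₁) :=
    hlocal.differentiableOn (Filter.Eventually.of_forall hFdiff) Metric.isOpen_ball
  refine ⟨g₀, gdiff, heq, ?_, ?_, ?_⟩
  · -- analyticity of the new family
    intro u hu
    exact ((hy.1 u hu).sub gdiff).const_mul _
  · -- analyticity of shifted coefficients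
    intro s
    exact hy.2.1 (s + 1)
  · -- the shifted expansion
    intro n
    obtain ⟨C, hC, U, hU, hb⟩ := hy.2.2 (n + 1)
    refine ⟨C, hC, U, hU, ?_⟩
    intro u hu z h1 h2
    have hupos : 0 < u := lt_of_lt_of_le (lt_of_lt_of_le hu₀ hU) hu
    have huc : (u : ℂ) ≠ 0 := by exact_mod_cast hupos.ne'
    have hsum : ∑ s ∈ Finset.range n, h (s + 1) z / (u : ℂ) ^ s =
        (u : ℂ) * ∑ s ∈ Finset.range n, h (s + 1) z / (u : ℂ) ^ (s + 1) := by
      rw [Finset.mul_sum]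
      refine Finset.sum_congr rfl fun s _ => ?_
      rw [pow_succ]
      field_simp
    have key : (u : ℂ) * (H u z - g₀ z) - ∑ s ∈ Finset.range n, h (s + 1) z / (u : ℂ) ^ s =
        (u : ℂ) * (H u z - ∑ s ∈ Finset.range (n + 1), h s z / (u : ℂ) ^ s) := by
      rw [heq z h1 h2, hsum,
        Finset.sum_range_succ' (fun s => h s z / (u : ℂ) ^ s) n]
      simp only [pow_zero, div_one]
      ring
    have hnorm := hb u hu z h1 h2
    have : ‖(u : ℂ) * (H u z - ∑ s ∈ Finset.range (n + 1), h s z / (u : ℂ) ^ s)‖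
        ≤ u * (C / u ^ (n + 1)) := by
      rw [norm_mul, Complex.norm_real, Real.norm_eq_abs, abs_of_pos hupos]
      exact mul_le_mul_of_nonneg_left hnorm hupos.le
    have hred : u * (C / u ^ (n + 1)) = C / u ^ n := by
      field_simp
      ring
    calc ‖(u : ℂ) * (H u z - g₀ z) - ∑ s ∈ Finset.range n, h (s + 1) z / (u : ℂ) ^ s‖
        = ‖(u : ℂ) * (H u z - ∑ s ∈ Finset.range (n + 1), h s z / (u : ℂ) ^ s)‖ := by rw [key]
      _ ≤ u * (C / u ^ (n + 1)) := this
      _ = C / u ^ n := hred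

/-- From the hypotheses, a uniform bound of `H` on every closed sub-disk. -/
lemma bound {ρ₀ ρ₁ : ℝ} {z₀ : ℂ} {u₀ : ℝ} (hρ₀ : 0 < ρ₀) (hρ : ρ₀ < ρ₁) (hu₀ : 0 < u₀)
    {H : ℝ → ℂ → ℂ} {h : ℕ → ℂ → ℂ} (hy : Hyps ρ₀ ρ₁ z₀ u₀ H h)
    {ρ : ℝ} (h1 : ρ₀ < ρ) (h2 : ρ < ρ₁) :
    ∃ C : ℝ, 0 < C ∧ ∃ U : ℝ, u₀ ≤ U ∧
      ∀ u : ℝ, U ≤ u → ∀ z : ℂ, ‖z - z₀‖ ≤ ρ → ‖H u z‖ ≤ C := by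
  obtain ⟨C, hC, U, hU, hb⟩ := hy.2.2 0
  refine ⟨C, hC, U, hU, ?_⟩
  intro u hu z hz
  have hudiff : DifferentiableOn ℂ (H u) (Metric.ball z₀ ρ₁) :=
    hy.1 u (le_trans hU hu)
  refine maxmod (lt_trans hρ₀ h1) h2 hudiff (fun w hw => ?_) z hz
  have hwn : ‖w - z₀‖ = ρ := by simpa [mem_sphere_iff_norm] using hw
  have := hb u hu w (hwn ▸ h1) (hwn ▸ h2)
  simpa using this

/-- The iterated construction: at each stage subtract the extended leading coefficient. -/
noncomputable def seqP {ρ₀ ρ₁ : ℝ} {z₀ : ℂ} {u₀ : ℝ} (hρ₀ : 0 < ρ₀) (hρ : ρ₀ < ρ₁)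
    (hu₀ : 0 < u₀)
    (p0 : {p : (ℝ → ℂ → ℂ) × (ℕ → ℂ → ℂ) // Hyps ρ₀ ρ₁ z₀ u₀ p.1 p.2}) :
    ℕ → {p : (ℝ → ℂ → ℂ) × (ℕ → ℂ → ℂ) // Hyps ρ₀ ρ₁ z₀ u₀ p.1 p.2}
  | 0 => p0
  | k + 1 =>
    ⟨((fun u z => (u : ℂ) * ((seqP hρ₀ hρ hu₀ p0 k).1.1 u z -
        Classical.choose (step hρ₀ hρ hu₀ (seqP hρ₀ hρ hu₀ p0 k).2) z)),
      (fun s => (seqP hρ₀ hρ hu₀ p0 k).1.2 (s + 1))),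
     (Classical.choose_spec (step hρ₀ hρ hu₀ (seqP hρ₀ hρ hu₀ p0 k).2)).2.2⟩

/-- Theorem 4.1 (analytic continuation of uniform asymptotic expansions from an
annulus to the full disk). -/
theorem stmt_0
    (ρ₀ ρ₁ : ℝ) (z₀ : ℂ) (u₀ : ℝ)
    (hρ₀ : 0 < ρ₀) (hρ : ρ₀ < ρ₁) (hu₀ : 0 < u₀)
    (H : ℝ → ℂ → ℂ) (h : ℕ → ℂ → ℂ)
    (hH : ∀ u : ℝ, u₀ ≤ u → DifferentiableOn ℂ (H u) (Metric.ball z₀ ρ₁))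
    (hh : ∀ s : ℕ, DifferentiableOn ℂ (h s)
      {z : ℂ | ρ₀ < ‖z - z₀‖ ∧ ‖z - z₀‖ < ρ₁})
    (hexp : ∀ n : ℕ, ∃ C : ℝ, 0 < C ∧ ∃ U : ℝ, u₀ ≤ U ∧
      ∀ u : ℝ, U ≤ u → ∀ z : ℂ, ρ₀ < ‖z - z₀‖ → ‖z - z₀‖ < ρ₁ →
        ‖H u z - ∑ s ∈ Finset.range n, h s z / (u : ℂ) ^ s‖ ≤ C / u ^ n) :
    ∃ g : ℕ → ℂ → ℂ,
      (∀ s : ℕ, DifferentiableOn ℂ (g s) (Metric.ball z₀ ρ₁)) ∧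
      (∀ s : ℕ, ∀ z : ℂ, ρ₀ < ‖z - z₀‖ → ‖z - z₀‖ < ρ₁ → g s z = h s z) ∧
      (∀ n : ℕ, ∀ ρ : ℝ, ρ₀ < ρ → ρ < ρ₁ →
        ∃ C : ℝ, 0 < C ∧ ∃ U : ℝ, u₀ ≤ U ∧
          ∀ u : ℝ, U ≤ u → ∀ z : ℂ, ‖z - z₀‖ ≤ ρ →
            ‖H u z - ∑ s ∈ Finset.range n, g s z / (u : ℂ) ^ s‖ ≤ C / u ^ n) := by
  set p0 : {p : (ℝ → ℂ → ℂ) × (ℕ → ℂ → ℂ) // Hyps ρ₀ ρ₁ z₀ u₀ p.1 p.2} :=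
    ⟨(H, h), hH, hh, hexp⟩ with hp0
  set P : ℕ → {p : (ℝ → ℂ → ℂ) × (ℕ → ℂ → ℂ) // Hyps ρ₀ ρ₁ z₀ u₀ p.1 p.2} :=
    seqP hρ₀ hρ hu₀ p0 with hP
  set g : ℕ → ℂ → ℂ := fun k => Classical.choose (step hρ₀ hρ hu₀ (P k).2) with hg
  have hgspec : ∀ k : ℕ,
      DifferentiableOn ℂ (g k) (Metric.ball z₀ ρ₁) ∧
      (∀ z : ℂ, ρ₀ < ‖z - z₀‖ → ‖z - z₀‖ < ρ₁ → g k z = (P k).1.2 0 z) := by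
    intro k
    have := Classical.choose_spec (step hρ₀ hρ hu₀ (P k).2)
    exact ⟨this.1, this.2.1⟩
  -- coefficients of stage k are shifted originals
  have hcoef : ∀ k s : ℕ, (P k).1.2 s = h (s + k) := by
    intro k
    induction k with
    | zero => intro s; rfl
    | succ k ih =>
      intro s
      have h1 : (P (k + 1)).1.2 s = (P k).1.2 (s + 1) := rfl
      have h2 : s + 1 + k = s + (k + 1) := by omega
      rw [h1, ih (s + 1), h2]
  -- the recursion relation
  have hrec : ∀ k : ℕ, ∀ u : ℝ, ∀ z : ℂ,
      (P (k + 1)).1.1 u z = (u : ℂ) * ((P k).1.1 u z - g k z) := fun k u z => rfl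
  -- closed form for stage k
  have hrel : ∀ k : ℕ, ∀ u : ℝ, (u : ℂ) ≠ 0 → ∀ z : ℂ,
      (P k).1.1 u z = (u : ℂ) ^ k *
        (H u z - ∑ s ∈ Finset.range k, g s z / (u : ℂ) ^ s) := by
    intro k
    induction k with
    | zero => intro u _ z; simp [hP, hp0, seqP]
    | succ k ih =>
      intro u hu z
      have hpow : ((u : ℂ)) ^ k ≠ 0 := pow_ne_zero _ hu
      rw [hrec k u z, ih u hu z, Finset.sum_range_succ]
      field_simp
      ring
  refine ⟨g, fun s => (hgspec s).1, ?_, ?_⟩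
  · intro s z h1 h2
    rw [(hgspec s).2 z h1 h2, hcoef s 0, Nat.zero_add]
  · intro n ρ h1 h2
    obtain ⟨C, hC, U, hU, hb⟩ := bound hρ₀ hρ hu₀ (P n).2 h1 h2
    refine ⟨C, hC, U, hU, ?_⟩
    intro u hu z hz
    have hupos : 0 < u := lt_of_lt_of_le (lt_of_lt_of_le hu₀ hU) hu
    have huc : (u : ℂ) ≠ 0 := by exact_mod_cast hupos.ne'
    have hbd := hb u hu z hz
    rw [hrel n u huc z, norm_mul, norm_pow, Complex.norm_real, Real.norm_eq_abs,
      abs_of_pos hupos] at hbd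
    have hpow : (0 : ℝ) < u ^ n := pow_pos hupos n
    exact (le_div_iff₀' hpow).2 hbd
end

section
/- Fix α > 0 and for real ζ > α set β̂(ζ) = ζ/(α²√(ζ² − α²)) − 1/α². Then, with e₂(α,β) = (1/16)β²(α²β + 2)²(5α⁴β² + 10α²β + 3), one has the exact identity e₂(α, β̂(ζ)) = (3ζ² + 2α²)/(16(ζ² − α²)³) for every ζ > α; equivalently e₂(α, β̂(ζ)) = −(1/4)Ψ̂(α,ζ) where Ψ̂(α,ζ) = −(3ζ² + 2α²)/(4(ζ² − α²)³). -/
/-- The second LG coefficient: e₂(α,β̂(ζ)) = (3ζ²+2α²)/(16(ζ²−α²)³) = −Ψ̂(α,ζ)/4. -/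
theorem stmt_6 (α ζ β : ℝ) (hα : 0 < α) (hζ : α < ζ)
    (hβ : β = ζ / (α ^ 2 * Real.sqrt (ζ ^ 2 - α ^ 2)) - 1 / α ^ 2) :
    (1 / 16) * β ^ 2 * (α ^ 2 * β + 2) ^ 2 * (5 * α ^ 4 * β ^ 2 + 10 * α ^ 2 * β + 3)
        = (3 * ζ ^ 2 + 2 * α ^ 2) / (16 * (ζ ^ 2 - α ^ 2) ^ 3) ∧
    (3 * ζ ^ 2 + 2 * α ^ 2) / (16 * (ζ ^ 2 - α ^ 2) ^ 3)
        = -(1 / 4) * (-(3 * ζ ^ 2 + 2 * α ^ 2) / (4 * (ζ ^ 2 - α ^ 2) ^ 3)) := by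
  have hpos : 0 < ζ ^ 2 - α ^ 2 := by nlinarith
  set s := Real.sqrt (ζ ^ 2 - α ^ 2) with hs
  have hs2 : s ^ 2 = ζ ^ 2 - α ^ 2 := Real.sq_sqrt hpos.le
  have hspos : 0 < s := Real.sqrt_pos.mpr hpos
  have hβ' : β = (ζ - s) / (α ^ 2 * s) := by
    rw [hβ]; field_simp
  constructor
  · have h1 : ζ ^ 2 - s ^ 2 = α ^ 2 := by linarith
    have h2 : s ^ 6 = (ζ ^ 2 - α ^ 2) ^ 3 := by
      rw [show s ^ 6 = (s ^ 2) ^ 3 by ring, hs2]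
    calc (1 / 16) * β ^ 2 * (α ^ 2 * β + 2) ^ 2 *
          (5 * α ^ 4 * β ^ 2 + 10 * α ^ 2 * β + 3)
        = (1 / 16) * ((ζ ^ 2 - s ^ 2) ^ 2 / α ^ 4) * (5 * ζ ^ 2 - 2 * s ^ 2) / s ^ 6 := by
          rw [hβ']; field_simp; ring
      _ = (3 * ζ ^ 2 + 2 * α ^ 2) / (16 * (ζ ^ 2 - α ^ 2) ^ 3) := by
          rw [h1, h2, hs2]; field_simp; ring
  · have hd : (ζ ^ 2 - α ^ 2) ^ 3 ≠ 0 := by positivity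
    field_simp
    ring
end

section
/- Let α ≥ 0 and u ∈ ℝ, and let I be an open interval with I ⊆ (α, ∞). Suppose Ŷ : ℝ → ℂ is twice differentiable on I and satisfies Ŷ″(ζ) = u²(ζ² − α²)·Ŷ(ζ) for all ζ ∈ I. Define Ỹ(ζ) = (ζ² − α²)^{−1/2}·Ŷ′(ζ) for ζ ∈ I. Then Ỹ is twice differentiable on I and satisfies Ỹ″(ζ) = {u²(ζ² − α²) + (2ζ² + α²)/(ζ² − α²)²}·Ỹ(ζ) for all ζ ∈ I. -/
private lemma sqrt_deriv (α : ℝ) {ζ : ℝ} (hs : 0 < ζ ^ 2 - α ^ 2) :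
    HasDerivAt (fun t : ℝ => Real.sqrt (t ^ 2 - α ^ 2))
      (ζ / Real.sqrt (ζ ^ 2 - α ^ 2)) ζ := by
  have h := ((hasDerivAt_pow 2 ζ).sub_const (α ^ 2)).sqrt hs.ne'
  convert h using 1
  have : Real.sqrt (ζ ^ 2 - α ^ 2) ≠ 0 := (Real.sqrt_pos.2 hs).ne'
  field_simp
  ring

/-- If Ŷ solves Ŷ″ = u²(ζ²−α²)Ŷ on an open interval I ⊆ (α,∞), then
    Ỹ = (ζ²−α²)^{−1/2} Ŷ′ solves Ỹ″ = {u²(ζ²−α²) + (2ζ²+α²)/(ζ²−α²)²} Ỹ on I. -/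
theorem stmt_9 (α u : ℝ) (hα : 0 ≤ α) (I : Set ℝ) (c d : ℝ) (hI : I = Set.Ioo c d)
    (hI' : I ⊆ Set.Ioi α) (Y Y' Y'' : ℝ → ℂ)
    (hY : ∀ ζ ∈ I, HasDerivAt Y (Y' ζ) ζ)
    (hY' : ∀ ζ ∈ I, HasDerivAt Y' (Y'' ζ) ζ)
    (hode : ∀ ζ ∈ I, Y'' ζ = ((u ^ 2 * (ζ ^ 2 - α ^ 2) : ℝ) : ℂ) * Y ζ) :
    ∃ T' T'' : ℝ → ℂ,
      (∀ ζ ∈ I, HasDerivAt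
        (fun t : ℝ => ((Real.sqrt (t ^ 2 - α ^ 2) : ℂ))⁻¹ * Y' t) (T' ζ) ζ) ∧
      (∀ ζ ∈ I, HasDerivAt T' (T'' ζ) ζ) ∧
      (∀ ζ ∈ I, T'' ζ =
        ((u ^ 2 * (ζ ^ 2 - α ^ 2) + (2 * ζ ^ 2 + α ^ 2) / (ζ ^ 2 - α ^ 2) ^ 2 : ℝ) : ℂ) *
          (((Real.sqrt (ζ ^ 2 - α ^ 2) : ℂ))⁻¹ * Y' ζ)) := by
  have hs : ∀ ζ ∈ I, 0 < ζ ^ 2 - α ^ 2 := by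
    intro ζ hζ
    have hζα : α < ζ := hI' hζ
    nlinarith
  refine ⟨fun ζ => ((-ζ / Real.sqrt (ζ ^ 2 - α ^ 2) ^ 3 : ℝ) : ℂ) * Y' ζ
      + ((Real.sqrt (ζ ^ 2 - α ^ 2) : ℂ))⁻¹ * Y'' ζ,
    fun ζ => ((u ^ 2 * (ζ ^ 2 - α ^ 2) + (2 * ζ ^ 2 + α ^ 2) / (ζ ^ 2 - α ^ 2) ^ 2 : ℝ) : ℂ) *
      (((Real.sqrt (ζ ^ 2 - α ^ 2) : ℂ))⁻¹ * Y' ζ), ?_, ?_, fun ζ hζ => rfl⟩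
  · intro ζ hζ
    have hsζ := hs ζ hζ
    have hr : 0 < Real.sqrt (ζ ^ 2 - α ^ 2) := Real.sqrt_pos.2 hsζ
    have hne : ((Real.sqrt (ζ ^ 2 - α ^ 2) : ℂ)) ≠ 0 := by
      exact_mod_cast hr.ne'
    have h3 : HasDerivAt (fun t : ℝ => ((Real.sqrt (t ^ 2 - α ^ 2) : ℂ)))
        ((ζ / Real.sqrt (ζ ^ 2 - α ^ 2) : ℝ) : ℂ) ζ := (sqrt_deriv α hsζ).ofReal_comp
    have h4 : HasDerivAt (fun t : ℝ => ((Real.sqrt (t ^ 2 - α ^ 2) : ℂ))⁻¹)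
        (-(((Real.sqrt (ζ ^ 2 - α ^ 2) : ℂ)) ^ 2)⁻¹ *
          ((ζ / Real.sqrt (ζ ^ 2 - α ^ 2) : ℝ) : ℂ)) ζ := (hasDerivAt_inv hne).comp ζ h3
    have h5 := h4.mul (hY' ζ hζ)
    convert h5 using 1
    case e'_4 => rfl
    case e'_8 => rfl
    have hr2 : ((Real.sqrt (ζ ^ 2 - α ^ 2) : ℂ)) ^ 2 = ((ζ : ℂ) ^ 2 - (α : ℂ) ^ 2) := by
      rw [← Complex.ofReal_pow, Real.sq_sqrt hsζ.le]; push_cast; ring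
    push_cast
    field_simp
  · intro ζ hζ
    have hsζ := hs ζ hζ
    have hr : 0 < Real.sqrt (ζ ^ 2 - α ^ 2) := Real.sqrt_pos.2 hsζ
    have hne : ((Real.sqrt (ζ ^ 2 - α ^ 2) : ℂ)) ≠ 0 := by
      exact_mod_cast hr.ne'
    have hrne : Real.sqrt (ζ ^ 2 - α ^ 2) ≠ 0 := hr.ne'
    -- derivative of Y''
    have hp : HasDerivAt (fun t : ℝ => (u ^ 2 * (t ^ 2 - α ^ 2) : ℝ)) (u ^ 2 * (2 * ζ)) ζ := by
      convert ((hasDerivAt_pow 2 ζ).sub_const (α ^ 2)).const_mul (u ^ 2) using 1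
      case e'_4 => rfl
      case e'_5 => rfl
      ring
    have hF := hp.ofReal_comp.mul (hY ζ hζ)
    have heq : Y'' =ᶠ[nhds ζ] fun t => ((u ^ 2 * (t ^ 2 - α ^ 2) : ℝ) : ℂ) * Y t := by
      filter_upwards [isOpen_Ioo.mem_nhds (hI ▸ hζ)] with t ht
      exact hode t (hI ▸ ht)
    have hY3 : HasDerivAt Y''
        (((u ^ 2 * (2 * ζ) : ℝ) : ℂ) * Y ζ + ((u ^ 2 * (ζ ^ 2 - α ^ 2) : ℝ) : ℂ) * Y' ζ) ζ :=
      hF.congr_of_eventuallyEq heq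
    -- derivative of A t = -t / sqrt^3
    have hden : HasDerivAt (fun t : ℝ => Real.sqrt (t ^ 2 - α ^ 2) ^ 3)
        (↑3 * Real.sqrt (ζ ^ 2 - α ^ 2) ^ 2 * (ζ / Real.sqrt (ζ ^ 2 - α ^ 2))) ζ :=
      (sqrt_deriv α hsζ).pow 3 |>.congr_deriv (by norm_num)
    have hA : HasDerivAt (fun t : ℝ => (-t / Real.sqrt (t ^ 2 - α ^ 2) ^ 3 : ℝ))
        (((-1) * Real.sqrt (ζ ^ 2 - α ^ 2) ^ 3 -
          (-ζ) * (↑3 * Real.sqrt (ζ ^ 2 - α ^ 2) ^ 2 * (ζ / Real.sqrt (ζ ^ 2 - α ^ 2)))) /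
          (Real.sqrt (ζ ^ 2 - α ^ 2) ^ 3) ^ 2) ζ :=
      ((hasDerivAt_id ζ).neg).div hden (pow_ne_zero 3 hrne)
    have h3 : HasDerivAt (fun t : ℝ => ((Real.sqrt (t ^ 2 - α ^ 2) : ℂ)))
        ((ζ / Real.sqrt (ζ ^ 2 - α ^ 2) : ℝ) : ℂ) ζ := (sqrt_deriv α hsζ).ofReal_comp
    have h4 : HasDerivAt (fun t : ℝ => ((Real.sqrt (t ^ 2 - α ^ 2) : ℂ))⁻¹)
        (-(((Real.sqrt (ζ ^ 2 - α ^ 2) : ℂ)) ^ 2)⁻¹ *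
          ((ζ / Real.sqrt (ζ ^ 2 - α ^ 2) : ℝ) : ℂ)) ζ := (hasDerivAt_inv hne).comp ζ h3
    have hT := (hA.ofReal_comp.mul (hY' ζ hζ)).add (h4.mul hY3)
    convert hT using 1
    case e'_4 => rfl
    case e'_8 => rfl
    rw [hode ζ hζ]
    have hr2 : ((Real.sqrt (ζ ^ 2 - α ^ 2) : ℂ)) ^ 2 = ((ζ : ℂ) ^ 2 - (α : ℂ) ^ 2) := by
      rw [← Complex.ofReal_pow, Real.sq_sqrt hsζ.le]; push_cast; ring
    push_cast
    set R : ℂ := ((Real.sqrt (ζ ^ 2 - α ^ 2) : ℂ)) with hR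
    rw [show ((ζ : ℂ) ^ 2 - (α : ℂ) ^ 2) = R ^ 2 from hr2.symm]
    have h14 : R ^ 14 * R⁻¹ ^ 14 = 1 := by
      rw [← mul_pow, mul_inv_cancel₀ hne, one_pow]
    field_simp
    linear_combination Y' ζ * hr2
end

section
/- For every real a with 0 ≤ a < 1, ∫_{−a}^{a} √(a² − t²)/(1 − t²) dt = π·(1 − √(1 − a²)). Consequently the quantity α defined by α = {(2/π)·∫_{−a}^{a} √(a² − t²)/(1 − t²) dt}^{1/2} satisfies (1/2)α² = 1 − √(1 − a²). -/
open Real Set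

set_option maxHeartbeats 1000000 in
private lemma stmt_11_aux (a : ℝ) (ha : 0 < a) (ha1 : a < 1) :
    (∫ t in (-a)..a, Real.sqrt (a ^ 2 - t ^ 2) / (1 - t ^ 2))
        = π * (1 - Real.sqrt (1 - a ^ 2)) := by
  obtain ⟨b, hbdef⟩ : ∃ b, b = Real.sqrt (1 - a ^ 2) := ⟨_, rfl⟩
  have h1a : (0:ℝ) < 1 - a ^ 2 := by nlinarith
  have hb0 : 0 < b := hbdef ▸ Real.sqrt_pos.mpr h1a
  have hbsq : b ^ 2 = 1 - a ^ 2 := hbdef ▸ Real.sq_sqrt h1a.le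
  set F : ℝ → ℝ := fun t => arcsin (t / a) - b * arcsin (b * t / (a * Real.sqrt (1 - t ^ 2))) with hF
  have hab : -a ≤ a := by linarith
  have hden : ∀ t ∈ Icc (-a) a, (1 : ℝ) - t ^ 2 ≠ 0 := by
    intro t ht
    obtain ⟨h1, h2⟩ := ht
    nlinarith
  have hcontf : ContinuousOn (fun t => Real.sqrt (a ^ 2 - t ^ 2) / (1 - t ^ 2)) (Icc (-a) a) := by
    apply ContinuousOn.div
    · exact (Real.continuous_sqrt.comp (by continuity)).continuousOn
    · exact (by continuity : Continuous fun t : ℝ => 1 - t ^ 2).continuousOn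
    · exact hden
  have hint : IntervalIntegrable (fun t => Real.sqrt (a ^ 2 - t ^ 2) / (1 - t ^ 2)) MeasureTheory.volume (-a) a := by
    apply ContinuousOn.intervalIntegrable
    rwa [Set.uIcc_of_le hab]
  have hcontF : ContinuousOn F (Icc (-a) a) := by
    apply ContinuousOn.sub
    · exact Real.continuous_arcsin.comp_continuousOn (by fun_prop)
    · apply ContinuousOn.mul continuousOn_const
      apply Real.continuous_arcsin.comp_continuousOn
      apply ContinuousOn.div (by fun_prop)
      · exact (continuous_const.mul (Real.continuous_sqrt.comp (by continuity))).continuousOn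
      · intro t ht
        have h1 := hden t ht
        have h2 : Real.sqrt (1 - t ^ 2) > 0 := Real.sqrt_pos.mpr (by
          obtain ⟨h3, h4⟩ := ht; nlinarith)
        positivity
  have hderiv : ∀ t ∈ Ioo (-a) a, HasDerivAt F (Real.sqrt (a ^ 2 - t ^ 2) / (1 - t ^ 2)) t := by
    intro t ht
    obtain ⟨ht1, ht2⟩ := ht
    have hta : t ^ 2 < a ^ 2 := by nlinarith
    have ht1' : t ^ 2 < 1 := by nlinarith
    obtain ⟨s1, hs1def⟩ : ∃ s, s = Real.sqrt (a ^ 2 - t ^ 2) := ⟨_, rfl⟩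
    obtain ⟨s2, hs2def⟩ : ∃ s, s = Real.sqrt (1 - t ^ 2) := ⟨_, rfl⟩
    have hs1 : 0 < s1 := hs1def ▸ Real.sqrt_pos.mpr (by nlinarith)
    have hs2 : 0 < s2 := hs2def ▸ Real.sqrt_pos.mpr (by nlinarith)
    have hs1sq : s1 ^ 2 = a ^ 2 - t ^ 2 := hs1def ▸ Real.sq_sqrt (by nlinarith)
    have hs2sq : s2 ^ 2 = 1 - t ^ 2 := hs2def ▸ Real.sq_sqrt (by nlinarith)
    -- first term
    have hd1 : HasDerivAt (fun t => arcsin (t / a)) (1 / s1) t := by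
      have h₁ : t / a ≠ -1 := by
        intro h
        have : t = -a := by field_simp at h; linarith
        linarith
      have h₂ : t / a ≠ 1 := by
        intro h
        have : t = a := by field_simp at h; linarith
        linarith
      have hcomp := (Real.hasDerivAt_arcsin h₁ h₂).comp t ((hasDerivAt_id t).div_const a)
      refine hcomp.congr_deriv (Eq.symm ?_)
      have hq : Real.sqrt (1 - (t / a) ^ 2) = s1 / a := by
        rw [show 1 - (t / a) ^ 2 = (s1 / a) ^ 2 by
          rw [div_pow, div_pow, hs1sq]; field_simp]
        exact Real.sqrt_sq (by positivity)
      rw [hq]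
      field_simp
    -- sqrt derivative
    have hdsqrt : HasDerivAt (fun t : ℝ => Real.sqrt (1 - t ^ 2)) (-t / s2) t := by
      have h := (Real.hasDerivAt_sqrt (by nlinarith : (1:ℝ) - t ^ 2 ≠ 0)).comp t
        (((hasDerivAt_id t).pow 2).const_sub 1)
      refine h.congr_deriv (Eq.symm ?_)
      rw [← hs2def]
      field_simp
      simp [mul_comm]
    have hdg : HasDerivAt (fun t => b * t / (a * Real.sqrt (1 - t ^ 2))) (b / (a * s2 ^ 3)) t := by
      have hnum : HasDerivAt (fun t : ℝ => b * t) b t := by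
        simpa using (hasDerivAt_id t).const_mul b
      have hden' : HasDerivAt (fun t : ℝ => a * Real.sqrt (1 - t ^ 2)) (a * (-t / s2)) t :=
        hdsqrt.const_mul a
      have hdiv := hnum.div hden' (by rw [← hs2def]; positivity)
      refine hdiv.congr_deriv (Eq.symm ?_)
      rw [← hs2def]
      field_simp
      linear_combination (-1)*hs2sq
    have hg2 : (b * t / (a * s2)) ^ 2 < 1 := by
      rw [div_pow, div_lt_one (by positivity)]
      rw [mul_pow, mul_pow, hbsq, hs2sq]
      nlinarith
    have hg1 : b * t / (a * s2) ≠ -1 := by intro h; rw [h] at hg2; norm_num at hg2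
    have hg1' : b * t / (a * s2) ≠ 1 := by intro h; rw [h] at hg2; norm_num at hg2
    have hsqrtg : Real.sqrt (1 - (b * t / (a * s2)) ^ 2) = s1 / (a * s2) := by
      rw [show 1 - (b * t / (a * s2)) ^ 2 = (s1 / (a * s2)) ^ 2 by
        have hne : (1:ℝ) - t ^ 2 ≠ 0 := by nlinarith
        have hne2 : a ≠ 0 := ne_of_gt ha
        rw [div_pow, div_pow, mul_pow, mul_pow, hbsq, hs1sq, hs2sq]
        field_simp
        ring]
      exact Real.sqrt_sq (by positivity)
    have hg1w : b * t / (a * Real.sqrt (1 - t ^ 2)) ≠ -1 := by rw [← hs2def]; exact hg1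
    have hg1w' : b * t / (a * Real.sqrt (1 - t ^ 2)) ≠ 1 := by rw [← hs2def]; exact hg1'
    have hd2 : HasDerivAt (fun t => arcsin (b * t / (a * Real.sqrt (1 - t ^ 2))))
        ((1 / (s1 / (a * s2))) * (b / (a * s2 ^ 3))) t := by
      have hcomp := (Real.hasDerivAt_arcsin hg1w hg1w').comp t hdg
      try simp only [Function.comp_def] at hcomp
      rw [← hs2def, hsqrtg] at hcomp
      exact hcomp
    have htot := hd1.sub (hd2.const_mul b)
    have heq : 1 / s1 - b * ((1 / (s1 / (a * s2))) * (b / (a * s2 ^ 3)))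
        = Real.sqrt (a ^ 2 - t ^ 2) / (1 - t ^ 2) := by
      rw [← hs1def, ← hs2sq]
      field_simp
      linear_combination hs2sq - hbsq - hs1sq
    rw [heq] at htot
    exact htot
  have hftc := intervalIntegral.integral_eq_sub_of_hasDeriv_right_of_le hab hcontF
    (fun t ht => (hderiv t ht).hasDerivWithinAt) hint
  rw [hftc]
  have ha' : a ≠ 0 := ne_of_gt ha
  have hFa : F a = π / 2 - b * (π / 2) := by
    simp only [hF]
    rw [div_self ha', Real.arcsin_one, ← hbdef,
      show b * a / (a * b) = 1 by field_simp, Real.arcsin_one]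
  have hFna : F (-a) = -(π / 2) + b * (π / 2) := by
    simp only [hF]
    rw [neg_div, div_self ha', Real.arcsin_neg, Real.arcsin_one,
      show (1:ℝ) - (-a) ^ 2 = 1 - a ^ 2 by ring, ← hbdef,
      show b * -a / (a * b) = -1 by field_simp, Real.arcsin_neg, Real.arcsin_one]
    ring
  rw [hFa, hFna, ← hbdef]
  ring


/-- ∫_{−a}^{a} √(a²−t²)/(1−t²) dt = π(1 − √(1−a²)), and hence the turning-point
    parameter α = {(2/π)∫…}^{1/2} satisfies α²/2 = 1 − √(1−a²). -/
theorem stmt_11 (a : ℝ) (ha : 0 ≤ a) (ha1 : a < 1) :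
    (∫ t in (-a)..a, Real.sqrt (a ^ 2 - t ^ 2) / (1 - t ^ 2))
        = π * (1 - Real.sqrt (1 - a ^ 2)) ∧
    (1 / 2) * (Real.sqrt ((2 / π) *
        ∫ t in (-a)..a, Real.sqrt (a ^ 2 - t ^ 2) / (1 - t ^ 2))) ^ 2
      = 1 - Real.sqrt (1 - a ^ 2) := by
  have hπ : (0:ℝ) < π := Real.pi_pos
  have key : (∫ t in (-a)..a, Real.sqrt (a ^ 2 - t ^ 2) / (1 - t ^ 2))
      = π * (1 - Real.sqrt (1 - a ^ 2)) := by
    rcases eq_or_lt_of_le ha with h0 | h0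
    · subst h0
      simp
    · exact stmt_11_aux a h0 ha1
  refine ⟨key, ?_⟩
  rw [key]
  have hble : Real.sqrt (1 - a ^ 2) ≤ 1 := Real.sqrt_le_one.mpr (by nlinarith)
  have hnn : (0:ℝ) ≤ 2 / π * (π * (1 - Real.sqrt (1 - a ^ 2))) := by
    have : (0:ℝ) ≤ 1 - Real.sqrt (1 - a ^ 2) := by linarith
    positivity
  rw [Real.sq_sqrt hnn]
  field_simp
end

section
/- Let 0 < a < 1 and let x be real with a < x < 1. Then ∫_a^x √(t² − a²)/(1 − t²) dt = √(1 − a²)·artanh( √(x² − a²)/(x√(1 − a²)) ) − ln( (x + √(x² − a²))/a ), where artanh(y) = (1/2)·ln((1+y)/(1−y)). (Note 0 < √(x² − a²)/(x√(1 − a²)) < 1, and ln((x+√(x²−a²))/a) = arccosh(x/a).) -/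
noncomputable def Fleg (a t : ℝ) : ℝ :=
  Real.sqrt (1 - a ^ 2) *
      ((1 / 2) * Real.log
        ((1 + Real.sqrt (t ^ 2 - a ^ 2) / (t * Real.sqrt (1 - a ^ 2)))
          / (1 - Real.sqrt (t ^ 2 - a ^ 2) / (t * Real.sqrt (1 - a ^ 2)))))
    - Real.log ((t + Real.sqrt (t ^ 2 - a ^ 2)) / a)

lemma Fleg_deriv (a t : ℝ) (ha : 0 < a) (hat : a < t) (ht1 : t < 1) :
    HasDerivAt (Fleg a) (Real.sqrt (t ^ 2 - a ^ 2) / (1 - t ^ 2)) t := by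
  have ht0 : 0 < t := ha.trans hat
  have h1t : (0:ℝ) < 1 - t ^ 2 := by nlinarith
  set s := Real.sqrt (t ^ 2 - a ^ 2) with hs_def
  set c := Real.sqrt (1 - a ^ 2) with hc_def
  have hsq : 0 < t ^ 2 - a ^ 2 := by nlinarith
  have hs : 0 < s := Real.sqrt_pos.mpr hsq
  have hs2 : s ^ 2 = t ^ 2 - a ^ 2 := Real.sq_sqrt hsq.le
  have hcsq : 0 < 1 - a ^ 2 := by nlinarith
  have hc : 0 < c := Real.sqrt_pos.mpr hcsq
  have hc2 : c ^ 2 = 1 - a ^ 2 := Real.sq_sqrt hcsq.le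
  have htc : 0 < t * c := mul_pos ht0 hc
  have hu_lt : s / (t * c) < 1 := by
    rw [div_lt_one htc]
    have h1 : t ^ 2 - a ^ 2 < (t * c) ^ 2 := by
      rw [mul_pow, hc2]; nlinarith [mul_pos (mul_pos ha ha) h1t]
    calc s = Real.sqrt (t ^ 2 - a ^ 2) := rfl
      _ < Real.sqrt ((t * c) ^ 2) := Real.sqrt_lt_sqrt hsq.le h1
      _ = t * c := Real.sqrt_sq htc.le
  have hu_pos : 0 < s / (t * c) := div_pos hs htc
  have h1u : 0 < 1 - s / (t * c) := by linarith
  have h1u' : 0 < 1 + s / (t * c) := by linarith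
  have hinner : HasDerivAt (fun t : ℝ => t ^ 2 - a ^ 2) (2 * t) t := by
    simpa using ((hasDerivAt_pow 2 t).sub_const (a ^ 2))
  have hsder : HasDerivAt (fun t : ℝ => Real.sqrt (t ^ 2 - a ^ 2)) (t / s) t := by
    have h := hinner.sqrt hsq.ne'
    convert h using 1
    rw [← hs_def]
    field_simp
  have hden : HasDerivAt (fun t : ℝ => t * c) c t := by
    simpa using (hasDerivAt_id t).mul_const c
  have hu : HasDerivAt (fun t : ℝ => Real.sqrt (t ^ 2 - a ^ 2) / (t * c))
      (a ^ 2 / (s * t ^ 2 * c)) t := by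
    have h := hsder.div hden htc.ne'
    refine h.congr_deriv ?_
    symm
    rw [← hs_def]
    field_simp
    linear_combination hs2
  have hnum : HasDerivAt (fun t : ℝ => 1 + Real.sqrt (t ^ 2 - a ^ 2) / (t * c))
      (a ^ 2 / (s * t ^ 2 * c)) t := hu.const_add 1
  have hden2 : HasDerivAt (fun t : ℝ => 1 - Real.sqrt (t ^ 2 - a ^ 2) / (t * c))
      (-(a ^ 2 / (s * t ^ 2 * c))) t := hu.const_sub 1
  have hq : HasDerivAt (fun t : ℝ =>
      (1 + Real.sqrt (t ^ 2 - a ^ 2) / (t * c)) / (1 - Real.sqrt (t ^ 2 - a ^ 2) / (t * c)))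
      ((a ^ 2 / (s * t ^ 2 * c) * (1 - s / (t * c))
        - (1 + s / (t * c)) * (-(a ^ 2 / (s * t ^ 2 * c)))) / (1 - s / (t * c)) ^ 2) t :=
    hnum.div hden2 h1u.ne'
  have hqpos : 0 < (1 + s / (t * c)) / (1 - s / (t * c)) := div_pos h1u' h1u
  have hlog1 : HasDerivAt (fun t : ℝ => Real.log
      ((1 + Real.sqrt (t ^ 2 - a ^ 2) / (t * c)) / (1 - Real.sqrt (t ^ 2 - a ^ 2) / (t * c))))
      (((a ^ 2 / (s * t ^ 2 * c) * (1 - s / (t * c))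
        - (1 + s / (t * c)) * (-(a ^ 2 / (s * t ^ 2 * c)))) / (1 - s / (t * c)) ^ 2)
        / ((1 + s / (t * c)) / (1 - s / (t * c)))) t := hq.log hqpos.ne'
  have hterm1 : HasDerivAt (fun t : ℝ => c * ((1 / 2) * Real.log
      ((1 + Real.sqrt (t ^ 2 - a ^ 2) / (t * c)) / (1 - Real.sqrt (t ^ 2 - a ^ 2) / (t * c)))))
      ((1 - a ^ 2) / (s * (1 - t ^ 2))) t := by
    have h := (hlog1.const_mul (1 / 2 : ℝ)).const_mul c
    refine h.congr_deriv ?_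
    symm
    set u := s / (t * c) with hu_def
    have e1 : (a ^ 2 / (s * t ^ 2 * c) * (1 - u) - (1 + u) * -(a ^ 2 / (s * t ^ 2 * c))) / (1 - u) ^ 2
        / ((1 + u) / (1 - u)) = 2 * (a ^ 2 / (s * t ^ 2 * c)) / ((1 - u) * (1 + u)) := by
      field_simp
      ring
    rw [e1]
    have key : (1 - u) * (1 + u) = a ^ 2 * (1 - t ^ 2) / (t ^ 2 * c ^ 2) := by
      rw [hu_def]
      field_simp
      linear_combination t^2*hc2 - hs2
    rw [key]
    field_simp
    linear_combination (-1:ℝ)*hc2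
  have hp : HasDerivAt (fun t : ℝ => (t + Real.sqrt (t ^ 2 - a ^ 2)) / a)
      ((1 + t / s) / a) t := ((hasDerivAt_id t).add hsder).div_const a
  have hppos : 0 < (t + s) / a := div_pos (by positivity) ha
  have hterm2 : HasDerivAt (fun t : ℝ => Real.log ((t + Real.sqrt (t ^ 2 - a ^ 2)) / a))
      (1 / s) t := by
    have h := hp.log hppos.ne'
    convert h using 1
    rw [← hs_def]
    field_simp
    ring
  have hF := hterm1.sub hterm2
  have heq : (1 - a ^ 2) / (s * (1 - t ^ 2)) - 1 / s = s / (1 - t ^ 2) := by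
    field_simp
    linear_combination (-1:ℝ)*hs2
  rw [heq] at hF
  exact hF

lemma Fleg_contOn (a x : ℝ) (ha : 0 < a) (hx : a < x) (hx1 : x < 1) :
    ContinuousOn (Fleg a) (Set.Icc a x) := by
  have hc : 0 < Real.sqrt (1 - a ^ 2) := Real.sqrt_pos.mpr (by nlinarith)
  have hscont : ContinuousOn (fun t : ℝ => Real.sqrt (t ^ 2 - a ^ 2)) (Set.Icc a x) :=
    (Continuous.sqrt (by continuity)).continuousOn
  have ht0 : ∀ t ∈ Set.Icc a x, (0:ℝ) < t := fun t ht => lt_of_lt_of_le ha ht.1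
  have hu_lt : ∀ t ∈ Set.Icc a x, Real.sqrt (t ^ 2 - a ^ 2) / (t * Real.sqrt (1 - a ^ 2)) < 1 := by
    intro t ht
    have htpos := ht0 t ht
    have htc : 0 < t * Real.sqrt (1 - a ^ 2) := mul_pos htpos hc
    rw [div_lt_one htc]
    have h1t : (0:ℝ) < 1 - t ^ 2 := by nlinarith [ht.2, hx1, htpos]
    have h1 : t ^ 2 - a ^ 2 < (t * Real.sqrt (1 - a ^ 2)) ^ 2 := by
      rw [mul_pow, Real.sq_sqrt (by nlinarith : (0:ℝ) ≤ 1 - a ^ 2)]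
      nlinarith [mul_pos (mul_pos ha ha) h1t]
    calc Real.sqrt (t ^ 2 - a ^ 2)
        < Real.sqrt ((t * Real.sqrt (1 - a ^ 2)) ^ 2) := by
          apply Real.sqrt_lt_sqrt _ h1
          nlinarith [ht.1, htpos]
      _ = t * Real.sqrt (1 - a ^ 2) := Real.sqrt_sq htc.le
  have hu_nonneg : ∀ t ∈ Set.Icc a x, 0 ≤ Real.sqrt (t ^ 2 - a ^ 2) / (t * Real.sqrt (1 - a ^ 2)) := by
    intro t ht
    exact div_nonneg (Real.sqrt_nonneg _) (mul_pos (ht0 t ht) hc).le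
  have hucont : ContinuousOn
      (fun t : ℝ => Real.sqrt (t ^ 2 - a ^ 2) / (t * Real.sqrt (1 - a ^ 2))) (Set.Icc a x) := by
    apply hscont.div (by fun_prop)
    intro t ht
    exact (mul_pos (ht0 t ht) hc).ne'
  apply ContinuousOn.sub
  · apply continuousOn_const.mul
    apply continuousOn_const.mul
    apply ContinuousOn.log
    · exact (continuousOn_const.add hucont).div ((continuousOn_const.sub hucont)) fun t ht =>
        (by linarith [hu_lt t ht] : (0:ℝ) < 1 - _).ne'
    · intro t ht
      have h1 := hu_lt t ht
      have h2 := hu_nonneg t ht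
      exact (div_pos (by linarith) (by linarith)).ne'
  · apply ContinuousOn.log
    · exact ((continuousOn_id.add hscont).div_const a)
    · intro t ht
      have h1 : 0 < t + Real.sqrt (t ^ 2 - a ^ 2) := by
        have := ht0 t ht
        positivity
      positivity

lemma Fleg_at_a (a : ℝ) (ha : 0 < a) : Fleg a a = 0 := by
  unfold Fleg
  simp [sub_self, Real.sqrt_zero, div_self ha.ne']

/-- The LG variable for the Legendre equation on (a,1):
    ∫_a^x √(t²−a²)/(1−t²) dt = √(1−a²)·artanh(√(x²−a²)/(x√(1−a²))) − ln((x+√(x²−a²))/a). -/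
theorem stmt_12 (a x : ℝ) (ha : 0 < a) (ha1 : a < 1) (hx : a < x) (hx1 : x < 1) :
    (∫ t in a..x, Real.sqrt (t ^ 2 - a ^ 2) / (1 - t ^ 2))
      = Real.sqrt (1 - a ^ 2) *
          ((1 / 2) * Real.log
            ((1 + Real.sqrt (x ^ 2 - a ^ 2) / (x * Real.sqrt (1 - a ^ 2)))
              / (1 - Real.sqrt (x ^ 2 - a ^ 2) / (x * Real.sqrt (1 - a ^ 2)))))
        - Real.log ((x + Real.sqrt (x ^ 2 - a ^ 2)) / a) := by
  have hint : IntervalIntegrable (fun t : ℝ => Real.sqrt (t ^ 2 - a ^ 2) / (1 - t ^ 2))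
      MeasureTheory.volume a x := by
    apply ContinuousOn.intervalIntegrable
    rw [Set.uIcc_of_le hx.le]
    apply ContinuousOn.div ((Continuous.sqrt (by continuity)).continuousOn) (by fun_prop)
    intro t ht
    have : t < 1 := lt_of_le_of_lt ht.2 hx1
    have : 0 < t := lt_of_lt_of_le ha ht.1
    nlinarith
  have h := intervalIntegral.integral_eq_sub_of_hasDerivAt_of_le hx.le
    (Fleg_contOn a x ha hx hx1)
    (fun t ht => Fleg_deriv a t ha ht.1 (ht.2.trans hx1)) hint
  rw [h, Fleg_at_a a ha]
  simp [Fleg]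
end

section
/- Let 0 < a < 1 and let x be real with −a < x < a. Then ∫_0^x √(a² − t²)/(1 − t²) dt = arcsin(x/a) − √(1 − a²)·arctan( x√(1 − a²)/√(a² − x²) ). -/
lemma key_deriv (a : ℝ) (ha : 0 < a) (ha1 : a < 1) (t : ℝ) (ht : -a < t) (ht1 : t < a) :
    HasDerivAt (fun y => Real.arcsin (y / a) - Real.sqrt (1 - a ^ 2) *
        Real.arctan (y * Real.sqrt (1 - a ^ 2) / Real.sqrt (a ^ 2 - y ^ 2)))
      (Real.sqrt (a ^ 2 - t ^ 2) / (1 - t ^ 2)) t := by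
  have ht2 : t ^ 2 < a ^ 2 := by nlinarith
  have hpos : 0 < a ^ 2 - t ^ 2 := by linarith
  set c := Real.sqrt (1 - a ^ 2) with hc
  set s := Real.sqrt (a ^ 2 - t ^ 2) with hsdef
  have hs0 : 0 < s := Real.sqrt_pos.mpr hpos
  have hs2 : s ^ 2 = a ^ 2 - t ^ 2 := Real.sq_sqrt hpos.le
  have hc2 : c ^ 2 = 1 - a ^ 2 := Real.sq_sqrt (by nlinarith)
  have ht1' : 1 - t ^ 2 > 0 := by nlinarith
  -- arcsin part
  have hta : t / a < 1 := by rw [div_lt_one ha]; exact ht1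
  have hta' : -1 < t / a := by rw [lt_div_iff₀ ha]; linarith
  have hdiv : HasDerivAt (fun y : ℝ => y / a) (1 / a) t := by
    simpa using (hasDerivAt_id t).div_const a
  have harcsin : HasDerivAt (fun y => Real.arcsin (y / a))
      (1 / Real.sqrt (1 - (t / a) ^ 2) * (1 / a)) t :=
    (Real.hasDerivAt_arcsin (by linarith) (by linarith)).comp t hdiv
  -- sqrt part
  have hinner : HasDerivAt (fun y : ℝ => a ^ 2 - y ^ 2) (-(2 * t)) t := by
    simpa using ((hasDerivAt_pow 2 t).const_sub (a ^ 2))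
  have hsqrt : HasDerivAt (fun y => Real.sqrt (a ^ 2 - y ^ 2))
      (1 / (2 * s) * (-(2 * t))) t :=
    (Real.hasDerivAt_sqrt hpos.ne').comp t hinner
  have hnum : HasDerivAt (fun y : ℝ => y * c) c t := by
    simpa using (hasDerivAt_id t).mul_const c
  have hquot : HasDerivAt (fun y => y * c / Real.sqrt (a ^ 2 - y ^ 2))
      ((c * s - t * c * (1 / (2 * s) * (-(2 * t)))) / s ^ 2) t :=
    hnum.div hsqrt hs0.ne'
  have harctan : HasDerivAt (fun y => Real.arctan (y * c / Real.sqrt (a ^ 2 - y ^ 2)))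
      (1 / (1 + (t * c / s) ^ 2) * ((c * s - t * c * (1 / (2 * s) * (-(2 * t)))) / s ^ 2)) t :=
    HasDerivAt.comp (h₂ := Real.arctan) t (Real.hasDerivAt_arctan (t * c / s)) hquot
  have h := harcsin.sub (harctan.const_mul c)
  refine h.congr_deriv ?_
  have hsa : Real.sqrt (1 - (t / a) ^ 2) = s / a := by
    rw [show (1 - (t/a)^2) = (a^2-t^2)/a^2 by field_simp, Real.sqrt_div hpos.le, Real.sqrt_sq ha.le]
  rw [hsa]
  have h1 : 1 + (t * c / s) ^ 2 = a ^ 2 * (1 - t ^ 2) / s ^ 2 := by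
    field_simp
    linear_combination hs2 + t ^ 2 * hc2
  rw [h1]
  field_simp
  linear_combination (-1) * hs2 - (s ^ 2 + t ^ 2) * hc2

/-- The turning-point variable identity on the oscillatory interval (−a,a):
    ∫_0^x √(a²−t²)/(1−t²) dt = arcsin(x/a) − √(1−a²)·arctan(x√(1−a²)/√(a²−x²)). -/
theorem stmt_13 (a x : ℝ) (ha : 0 < a) (ha1 : a < 1) (hx : -a < x) (hx1 : x < a) :
    (∫ t in (0 : ℝ)..x, Real.sqrt (a ^ 2 - t ^ 2) / (1 - t ^ 2))
      = Real.arcsin (x / a) - Real.sqrt (1 - a ^ 2) *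
          Real.arctan (x * Real.sqrt (1 - a ^ 2) / Real.sqrt (a ^ 2 - x ^ 2)) := by
  have hsub : ∀ t ∈ Set.uIcc (0 : ℝ) x, -a < t ∧ t < a := by
    intro t ht
    rw [Set.uIcc_eq_union] at ht
    rcases ht with ht | ht <;> rcases ht with ⟨h1, h2⟩ <;> constructor <;> linarith
  have hFTC := intervalIntegral.integral_eq_sub_of_hasDerivAt
    (f := fun y => Real.arcsin (y / a) - Real.sqrt (1 - a ^ 2) *
        Real.arctan (y * Real.sqrt (1 - a ^ 2) / Real.sqrt (a ^ 2 - y ^ 2)))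
    (fun t ht => key_deriv a ha ha1 t (hsub t ht).1 (hsub t ht).2)
    (by
      apply ContinuousOn.intervalIntegrable
      apply ContinuousOn.div
      · exact (Real.continuous_sqrt.comp (by continuity)).continuousOn
      · exact (by continuity : Continuous fun t : ℝ => 1 - t ^ 2).continuousOn
      · intro t ht
        obtain ⟨h1, h2⟩ := hsub t ht
        have : t ^ 2 < 1 := by nlinarith
        nlinarith)
  rw [hFTC]
  simp
end

section
/- Let 0 < a < 1 and define ξ(x) = ∫_a^x √(t² − a²)/(1 − t²) dt for a < x < 1. Then lim_{x → a⁺} ξ(x)/(x − a)^{3/2} = 2√(2a)/(3(1 − a²)). -/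
set_option maxHeartbeats 800000

open Set Filter MeasureTheory intervalIntegral

/-- Behavior of ξ at the turning point: ξ(x)/(x−a)^{3/2} → 2√(2a)/(3(1−a²)) as x → a⁺. -/
theorem stmt_14 (a : ℝ) (ha : 0 < a) (ha1 : a < 1) :
    Filter.Tendsto
      (fun x : ℝ =>
        (∫ t in a..x, Real.sqrt (t ^ 2 - a ^ 2) / (1 - t ^ 2)) / Real.sqrt (x - a) ^ 3)
      (nhdsWithin a (Set.Ioi a))
      (nhds (2 * Real.sqrt (2 * a) / (3 * (1 - a ^ 2)))) := by
  set φ : ℝ → ℝ := fun t => Real.sqrt (t ^ 2 - a ^ 2) / (1 - t ^ 2) with hφ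
  set b : ℝ := (a + 1) / 2 with hb
  have hab : a < b := by simp [hb]; linarith
  have hb1 : b < 1 := by simp [hb]; linarith
  -- continuity of φ at points t with 1 - t^2 ≠ 0
  have hφc : ∀ t : ℝ, 1 - t ^ 2 ≠ 0 → ContinuousAt φ t := by
    intro t ht
    exact ((Real.continuous_sqrt.comp (by continuity)).continuousAt).div (by fun_prop) ht
  have hne : ∀ t ∈ Icc a b, 1 - t ^ 2 ≠ 0 := by
    intro t ht
    have h1 : t < 1 := lt_of_le_of_lt ht.2 hb1
    have h2 : (0:ℝ) < t := lt_of_lt_of_le ha ht.1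
    nlinarith
  have hφint : IntegrableOn φ (uIcc a b) := by
    rw [uIcc_of_le hab.le]
    exact (ContinuousOn.integrableOn_compact isCompact_Icc
      (fun t ht => (hφc t (hne t ht)).continuousWithinAt))
  -- f, g, their derivatives
  set f : ℝ → ℝ := fun x => ∫ t in a..x, φ t with hf
  set g : ℝ → ℝ := fun x => Real.sqrt (x - a) ^ 3 with hg
  have hff' : ∀ x ∈ Ioo a b, HasDerivAt f (φ x) x := by
    intro x hx
    have hint : IntervalIntegrable φ MeasureTheory.volume a x := by
      apply (hφint.mono_set ?_).intervalIntegrable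
      rw [uIcc_of_le hx.1.le, uIcc_of_le hab.le]
      exact Icc_subset_Icc le_rfl hx.2.le
    have hφm : Measurable φ := by
      apply Measurable.div
      · exact (Real.continuous_sqrt.measurable).comp (by measurability)
      · measurability
    exact integral_hasDerivAt_right hint
      (hφm.aestronglyMeasurable.stronglyMeasurableAtFilter)
      (hφc x (hne x ⟨hx.1.le, hx.2.le⟩))
  have hgg' : ∀ x ∈ Ioo a b, HasDerivAt g (3 / 2 * Real.sqrt (x - a)) x := by
    intro x hx
    have hxa : 0 < x - a := by linarith [hx.1]
    have hs := (Real.hasDerivAt_sqrt (ne_of_gt hxa)).comp x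
      ((hasDerivAt_id x).sub_const a)
    have h3 := hs.pow 3
    refine h3.congr_deriv ?_
    have hsp : Real.sqrt (x - a) > 0 := Real.sqrt_pos.mpr hxa
    have : Real.sqrt (x - a) ^ 2 = x - a := Real.sq_sqrt hxa.le
    simp only [Function.comp_apply, id]
    field_simp
    norm_num
    nlinarith [Real.sq_sqrt hxa.le]
  have hg' : ∀ x ∈ Ioo a b, 3 / 2 * Real.sqrt (x - a) ≠ 0 := by
    intro x hx
    have : 0 < Real.sqrt (x - a) := Real.sqrt_pos.mpr (by linarith [hx.1])
    positivity
  have hcf : ContinuousOn f (Ico a b) := by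
    exact (continuousOn_primitive_interval hφint).mono
      (by rw [uIcc_of_le hab.le]; exact Ico_subset_Icc_self)
  have hcg : ContinuousOn g (Ico a b) :=
    ((Real.continuous_sqrt.comp (continuous_id.sub continuous_const)).pow 3).continuousOn
  have hfa : f a = 0 := by simp [hf]
  have hga : g a = 0 := by simp [hg]
  have hdiv : Tendsto (fun x => φ x / (3 / 2 * Real.sqrt (x - a))) (nhdsWithin a (Ioi a))
      (nhds (2 * Real.sqrt (2 * a) / (3 * (1 - a ^ 2)))) := by
    have hcont : Tendsto (fun x : ℝ => 2 * Real.sqrt (x + a) / (3 * (1 - x ^ 2)))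
        (nhdsWithin a (Ioi a)) (nhds (2 * Real.sqrt (2 * a) / (3 * (1 - a ^ 2)))) := by
      have hc : ContinuousAt (fun x : ℝ => 2 * Real.sqrt (x + a) / (3 * (1 - x ^ 2))) a := by
        apply ContinuousAt.div (by fun_prop) (by fun_prop)
        have : (0:ℝ) < 1 - a ^ 2 := by nlinarith
        positivity
      have := (hc.continuousWithinAt (s := Ioi a)).tendsto
      simpa [two_mul] using this
    apply hcont.congr'
    filter_upwards [Ioo_mem_nhdsGT_of_mem ⟨le_refl a, hab⟩] with x hx
    have hxa : 0 < x - a := by linarith [hx.1]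
    have hsp : 0 < Real.sqrt (x - a) := Real.sqrt_pos.mpr hxa
    have hsq : Real.sqrt (x ^ 2 - a ^ 2) = Real.sqrt (x - a) * Real.sqrt (x + a) := by
      rw [← Real.sqrt_mul hxa.le]; ring_nf
    have h1 : (1 - x ^ 2) ≠ 0 := by
      have : x < 1 := lt_trans hx.2 hb1
      have : 0 < x := lt_trans ha hx.1
      nlinarith
    rw [hφ]
    simp only
    rw [hsq]
    field_simp
  have := HasDerivAt.lhopital_zero_right_on_Ico hab hff' hgg' hcf hcg hg' hfa hga hdiv
  exact this
end

section
/- Let 0 < a < 1 and define ξ(x) = ∫_a^x √(t² − a²)/(1 − t²) dt for a < x < 1. Then lim_{x → 1⁻} [ ξ(x) + (1/2)√(1 − a²)·ln( (1 − x)/(2(1 − a²)) ) ] = −ln(1 + √(1 − a²)) + (1 − √(1 − a²))·ln a. -/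
open Real Filter Set

private lemma xi_deriv (a : ℝ) (ha : 0 < a) (ha1 : a < 1) {t : ℝ} (hat : a < t) (ht1 : t < 1) :
    HasDerivAt (fun u : ℝ => -Real.log (u + Real.sqrt (u^2 - a^2))
      + Real.sqrt (1 - a^2) * Real.log (Real.sqrt (1 - a^2) * u + Real.sqrt (u^2 - a^2))
      - Real.sqrt (1 - a^2) / 2 * Real.log (1 - u^2))
      (Real.sqrt (t^2 - a^2) / (1 - t^2)) t := by
  have ht0 : 0 < t := ha.trans hat
  have hta : 0 < t^2 - a^2 := by nlinarith
  have h1t : 0 < 1 - t^2 := by nlinarith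
  have h1a : 0 < 1 - a^2 := by nlinarith
  set s := Real.sqrt (1 - a^2) with hs_def
  set r := Real.sqrt (t^2 - a^2) with hr_def
  have hr : 0 < r := Real.sqrt_pos.2 hta
  have hs : 0 < s := Real.sqrt_pos.2 h1a
  have hr2 : r^2 = t^2 - a^2 := Real.sq_sqrt hta.le
  have hs2 : s^2 = 1 - a^2 := Real.sq_sqrt h1a.le
  have hpoly : HasDerivAt (fun u : ℝ => u^2 - a^2) (2*t) t := by
    simpa using (hasDerivAt_pow 2 t).sub_const (a^2)
  have hrd : HasDerivAt (fun u : ℝ => Real.sqrt (u^2 - a^2)) (2*t/(2*r)) t :=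
    hpoly.sqrt (ne_of_gt hta)
  have hA : HasDerivAt (fun u : ℝ => Real.log (u + Real.sqrt (u^2 - a^2)))
      ((1 + 2*t/(2*r)) / (t + r)) t := by
    have h := ((hasDerivAt_id t).add hrd).log (by positivity : t + r ≠ 0)
    simpa using h
  have hB : HasDerivAt (fun u : ℝ => Real.log (s * u + Real.sqrt (u^2 - a^2)))
      ((s*1 + 2*t/(2*r)) / (s*t + r)) t := by
    have hst : (0:ℝ) < s*t + r := by positivity
    have h := (((hasDerivAt_id t).const_mul s).add hrd).log (ne_of_gt hst)
    simpa using h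
  have hC : HasDerivAt (fun u : ℝ => Real.log (1 - u^2)) ((0 - 2*t) / (1 - t^2)) t := by
    have h1 : HasDerivAt (fun u : ℝ => 1 - u^2) (0 - 2*t) t := by
      simpa using (hasDerivAt_pow 2 t).const_sub (1:ℝ)
    exact h1.log (ne_of_gt h1t)
  have hsum := (hA.neg.add (hB.const_mul s)).sub (hC.const_mul (s/2))
  convert hsum using 1
  · rfl
  · rfl
  · rfl
  have h1 : 0 < t + r := by positivity
  have h2 : 0 < s*t + r := by positivity
  field_simp
  linear_combination (2*r*t + 2*r^2 + 2 - 2*s^2 - 2*a^2) * hr2 + (-2*r*t - 2*t^2 + 2*a^2) * hs2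

/-- Logarithmic behavior of ξ at the singularity x = 1:
    ξ(x) + (1/2)√(1−a²) ln((1−x)/(2(1−a²))) → −ln(1+√(1−a²)) + (1−√(1−a²)) ln a
    as x → 1⁻. -/
theorem stmt_15 (a : ℝ) (ha : 0 < a) (ha1 : a < 1) :
    Filter.Tendsto
      (fun x : ℝ =>
        (∫ t in a..x, Real.sqrt (t ^ 2 - a ^ 2) / (1 - t ^ 2))
          + (1 / 2) * Real.sqrt (1 - a ^ 2) * Real.log ((1 - x) / (2 * (1 - a ^ 2))))
      (nhdsWithin 1 (Set.Iio 1))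
      (nhds (-Real.log (1 + Real.sqrt (1 - a ^ 2))
        + (1 - Real.sqrt (1 - a ^ 2)) * Real.log a)) := by
  have h1a : 0 < 1 - a^2 := by nlinarith
  set s := Real.sqrt (1 - a^2) with hs_def
  have hs : 0 < s := Real.sqrt_pos.2 h1a
  have hs2 : s^2 = 1 - a^2 := Real.sq_sqrt h1a.le
  set F : ℝ → ℝ := fun u => -Real.log (u + Real.sqrt (u^2 - a^2))
      + s * Real.log (s * u + Real.sqrt (u^2 - a^2))
      - s / 2 * Real.log (1 - u^2) with hF_def
  -- value of F a
  have hFa : F a = -Real.log a + s * Real.log (s * a) - s/2 * Real.log (1 - a^2) := by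
    simp [hF_def, sub_self, Real.sqrt_zero]
  -- continuity of F on Ico a 1
  have hsq_cont : Continuous (fun u : ℝ => Real.sqrt (u^2 - a^2)) := by
    exact Real.continuous_sqrt.comp (by continuity)
  have hcont : ContinuousOn F (Set.Ico a 1) := by
    apply ContinuousOn.sub
    · apply ContinuousOn.add
      · apply ContinuousOn.neg
        apply ContinuousOn.log
        · exact (continuous_id.add hsq_cont).continuousOn
        · intro x hx
          have : 0 < x := lt_of_lt_of_le ha hx.1
          have := Real.sqrt_nonneg (x^2 - a^2)
          positivity
      · apply ContinuousOn.mul continuousOn_const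
        apply ContinuousOn.log
        · exact ((continuous_const.mul continuous_id).add hsq_cont).continuousOn
        · intro x hx
          have hx0 : 0 < x := lt_of_lt_of_le ha hx.1
          have := Real.sqrt_nonneg (x^2 - a^2)
          positivity
    · apply ContinuousOn.mul continuousOn_const
      apply ContinuousOn.log
      · exact (continuous_const.sub (continuous_pow 2)).continuousOn
      · intro x hx
        have hx0 : 0 ≤ x := le_trans ha.le hx.1
        have : x^2 < 1 := by nlinarith [hx.2]
        intro h; linarith [this]
  -- FTC on [a, x] for x ∈ Ioo a 1
  have key : ∀ x ∈ Set.Ioo a 1, (∫ t in a..x, Real.sqrt (t ^ 2 - a ^ 2) / (1 - t ^ 2))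
      = F x - F a := by
    intro x hx
    apply intervalIntegral.integral_eq_sub_of_hasDeriv_right_of_le hx.1.le
    · exact hcont.mono (Set.Icc_subset_Ico_right hx.2)
    · intro t ht
      exact (xi_deriv a ha ha1 ht.1 (ht.2.trans hx.2)).hasDerivWithinAt
    · apply ContinuousOn.intervalIntegrable
      apply ContinuousOn.div
      · exact hsq_cont.continuousOn
      · exact (continuous_const.sub (continuous_pow 2)).continuousOn
      · intro t ht
        rw [Set.uIcc_of_le hx.1.le] at ht
        have ht0 : 0 ≤ t := le_trans ha.le ht.1
        have : t^2 < 1 := by nlinarith [ht.2, hx.2]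
        intro h; linarith [this]
  -- the limit function H
  set H : ℝ → ℝ := fun x => -Real.log (x + Real.sqrt (x^2 - a^2))
      + s * Real.log (s * x + Real.sqrt (x^2 - a^2))
      - s/2 * Real.log (1 + x) - s/2 * Real.log (2 * (1 - a^2)) - F a with hH_def
  have hev : ∀ᶠ x in nhdsWithin (1:ℝ) (Set.Iio 1), x ∈ Set.Ioo a 1 := by
    have h₁ : Set.Ioi a ∈ nhdsWithin (1:ℝ) (Set.Iio 1) :=
      nhdsWithin_le_nhds (Ioi_mem_nhds ha1)
    filter_upwards [h₁, self_mem_nhdsWithin] with x hx1 hx2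
    exact ⟨hx1, hx2⟩
  have heq : ∀ x ∈ Set.Ioo a 1,
      (∫ t in a..x, Real.sqrt (t ^ 2 - a ^ 2) / (1 - t ^ 2))
        + (1 / 2) * s * Real.log ((1 - x) / (2 * (1 - a ^ 2))) = H x := by
    intro x hx
    rw [key x hx]
    have hx1 : (0:ℝ) < 1 - x := by linarith [hx.2]
    have hx1' : (0:ℝ) < 1 + x := by linarith [ha.trans hx.1]
    have hlogd : Real.log ((1 - x) / (2 * (1 - a ^ 2)))
        = Real.log (1 - x) - Real.log (2 * (1 - a^2)) :=
      Real.log_div (ne_of_gt hx1) (by positivity)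
    have hfac : (1:ℝ) - x^2 = (1 - x) * (1 + x) := by ring
    have hlogm : Real.log (1 - x^2) = Real.log (1 - x) + Real.log (1 + x) := by
      rw [hfac, Real.log_mul (ne_of_gt hx1) (ne_of_gt hx1')]
    simp only [hF_def, hH_def, hlogd, hlogm]
    ring
  have hH_tendsto : Filter.Tendsto H (nhdsWithin 1 (Set.Iio 1)) (nhds (H 1)) := by
    have : ContinuousAt H 1 := by
      have h1 : (0:ℝ) < 1 + Real.sqrt (1^2 - a^2) := by positivity
      have h2 : (0:ℝ) < s * 1 + Real.sqrt (1^2 - a^2) := by positivity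
      apply ContinuousAt.sub
      apply ContinuousAt.sub
      apply ContinuousAt.sub
      apply ContinuousAt.add
      · apply ContinuousAt.neg
        apply ContinuousAt.log
        · exact (continuous_id.add hsq_cont).continuousAt
        · exact ne_of_gt h1
      · apply ContinuousAt.mul continuousAt_const
        apply ContinuousAt.log
        · exact ((continuous_const.mul continuous_id).add hsq_cont).continuousAt
        · exact ne_of_gt h2
      · apply ContinuousAt.mul continuousAt_const
        apply ContinuousAt.log
        · exact (continuous_const.add continuous_id).continuousAt
        · norm_num
      · exact continuousAt_const
      · exact continuousAt_const
    exact this.continuousWithinAt.tendsto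
  have hH1 : H 1 = -Real.log (1 + s) + (1 - s) * Real.log a := by
    have h12 : (1:ℝ)^2 - a^2 = 1 - a^2 := by ring
    have hsqrt1 : Real.sqrt (1^2 - a^2) = s := by rw [h12]
    have hlog2s : Real.log (s * 1 + s) = Real.log 2 + Real.log s := by
      rw [show s * 1 + s = 2 * s by ring, Real.log_mul (by norm_num) (ne_of_gt hs)]
    have hlogsa : Real.log (s * a) = Real.log s + Real.log a :=
      Real.log_mul (ne_of_gt hs) (ne_of_gt ha)
    have hlog2a : Real.log (2 * (1 - a^2)) = Real.log 2 + Real.log (1 - a^2) :=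
      Real.log_mul (by norm_num) (ne_of_gt h1a)
    have hloga2 : Real.log (1 - a^2) = 2 * Real.log s := by
      rw [← hs2, Real.log_pow]; push_cast; ring
    have h11 : Real.log (1 + 1) = Real.log 2 := by norm_num
    simp only [hH_def, hFa, hsqrt1, hlog2s, hlogsa, hlog2a, hloga2, h11]
    ring
  rw [hH1] at hH_tendsto
  exact hH_tendsto.congr' (hev.mono fun x hx => (heq x hx).symm)
end

section
/- Let 0 < a < 1 and for real z with a < z < 1 set β(z) = z/(a²√(z² − a²)) − 1/a², and define E₁(a,β) = (1/24)β·{5a⁴(1 − a²)β² + 15a²(1 − a²)β − 12a² + 9}. Let ψ(a,z) = (1 − z²)·((4a² − 3)z² − a²(2 − a²))/(4(z² − a²)³). Then the function z ↦ E₁(a, β(z)) is differentiable on (a, 1) with derivative equal to (1/2)·ψ(a,z)·√(z² − a²)/(1 − z²) for every z ∈ (a, 1). -/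
/-- The first LG coefficient E₁(a,β(z)) has derivative (1/2)ψ(a,z)√(z²−a²)/(1−z²). -/
theorem stmt_17 (a : ℝ) (ha : 0 < a) (ha1 : a < 1)
    (β : ℝ → ℝ) (hβ : β = fun z : ℝ => z / (a ^ 2 * Real.sqrt (z ^ 2 - a ^ 2)) - 1 / a ^ 2)
    (E₁ : ℝ → ℝ) (hE : E₁ = fun b : ℝ =>
      (1 / 24) * b * (5 * a ^ 4 * (1 - a ^ 2) * b ^ 2 + 15 * a ^ 2 * (1 - a ^ 2) * b
        - 12 * a ^ 2 + 9))
    (ψ : ℝ → ℝ) (hψ : ψ = fun z : ℝ =>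
      (1 - z ^ 2) * ((4 * a ^ 2 - 3) * z ^ 2 - a ^ 2 * (2 - a ^ 2))
        / (4 * (z ^ 2 - a ^ 2) ^ 3)) :
    ∀ z : ℝ, a < z → z < 1 →
      HasDerivAt (fun t : ℝ => E₁ (β t))
        ((1 / 2) * ψ z * Real.sqrt (z ^ 2 - a ^ 2) / (1 - z ^ 2)) z := by
  subst hβ hE hψ
  intro z hz hz1
  have ha0 : (0:ℝ) < a ^ 2 := by positivity
  have hzs : (0:ℝ) < z ^ 2 - a ^ 2 := by nlinarith
  set s := Real.sqrt (z ^ 2 - a ^ 2) with hsdef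
  have hs0 : 0 < s := Real.sqrt_pos.mpr hzs
  have hs2 : s ^ 2 = z ^ 2 - a ^ 2 := Real.sq_sqrt hzs.le
  have h1 : HasDerivAt (fun t : ℝ => t ^ 2 - a ^ 2) (2 * z) z := by
    simpa using (hasDerivAt_pow 2 z).sub_const (a ^ 2)
  have hsqrt : HasDerivAt (fun t : ℝ => Real.sqrt (t ^ 2 - a ^ 2)) (z / s) z := by
    have h : HasDerivAt (fun t : ℝ => Real.sqrt (t ^ 2 - a ^ 2))
        (1 / (2 * Real.sqrt (z ^ 2 - a ^ 2)) * (2 * z)) z :=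
      (Real.hasDerivAt_sqrt (ne_of_gt hzs)).comp z h1
    convert h using 1
    rw [← hsdef]; field_simp
  have hden : HasDerivAt (fun t : ℝ => a ^ 2 * Real.sqrt (t ^ 2 - a ^ 2)) (a ^ 2 * (z / s)) z :=
    hsqrt.const_mul _
  have hdne : a ^ 2 * Real.sqrt (z ^ 2 - a ^ 2) ≠ 0 := by
    rw [← hsdef]; positivity
  have hβ' : HasDerivAt (fun t : ℝ => t / (a ^ 2 * Real.sqrt (t ^ 2 - a ^ 2)) - 1 / a ^ 2)
      ((1 * (a ^ 2 * s) - z * (a ^ 2 * (z / s))) / (a ^ 2 * s) ^ 2) z := by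
    exact ((hasDerivAt_id z).div hden hdne).sub_const (1 / a ^ 2)
  set b := z / (a ^ 2 * Real.sqrt (z ^ 2 - a ^ 2)) - 1 / a ^ 2 with hbdef
  have hE' : HasDerivAt (fun b : ℝ =>
      (1 / 24) * b * (5 * a ^ 4 * (1 - a ^ 2) * b ^ 2 + 15 * a ^ 2 * (1 - a ^ 2) * b
        - 12 * a ^ 2 + 9))
      ((1 / 24) * (5 * a ^ 4 * (1 - a ^ 2) * b ^ 2 + 15 * a ^ 2 * (1 - a ^ 2) * b
        - 12 * a ^ 2 + 9)
       + (1 / 24) * b * (5 * a ^ 4 * (1 - a ^ 2) * (2 * b) + 15 * a ^ 2 * (1 - a ^ 2))) b := by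
    have hinner : HasDerivAt (fun x : ℝ => 5 * a ^ 4 * (1 - a ^ 2) * x ^ 2
        + 15 * a ^ 2 * (1 - a ^ 2) * x - 12 * a ^ 2 + 9)
        (5 * a ^ 4 * (1 - a ^ 2) * (2 * b) + 15 * a ^ 2 * (1 - a ^ 2)) b := by
      have h2 : HasDerivAt (fun x : ℝ => x ^ 2) (2 * b) b := by
        simpa using hasDerivAt_pow 2 b
      simpa using (((h2.const_mul (5 * a ^ 4 * (1 - a ^ 2))).add
        ((hasDerivAt_id b).const_mul (15 * a ^ 2 * (1 - a ^ 2)))).sub_const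
          (12 * a ^ 2)).add_const 9
    have hlin : HasDerivAt (fun x : ℝ => (1 / 24) * x) (1 / 24) b := by
      simpa using (hasDerivAt_id b).const_mul (1 / 24 : ℝ)
    exact hlin.mul hinner
  have hcomp := hE'.comp z hβ'
  have h1z : (0:ℝ) < 1 - z ^ 2 := by nlinarith
  refine hcomp.congr_deriv (Eq.symm ?_)
  simp only [hbdef]
  rw [← hs2, Real.sqrt_sq hs0.le]
  field_simp
  linear_combination (norm := ring_nf) ((48:ℝ) * s ^ 2 + (-24:ℝ) * a ^ 2 * s ^ 2 + (-120:ℝ) * z ^ 2 + (120:ℝ) * a ^ 2 * z ^ 2 + (-48:ℝ) * a ^ 2 + (24:ℝ) * a ^ 4) * hs2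
end

section
/- Fix α with 0 < α < √2 and for real u > 0 set μ = (1 − α²/2)·u. Define C₁(u) = 2^{3/4}·√π·e^{(μ−u)/2}·u^{u−3/4}·(u+μ)^{−(u+μ)/2} / (4·Γ(u)) and C₂(u) = 2^{1/4}·e^{(u−μ)/2}·u^{1/4−u}·(u+μ)^{(u+μ)/2}·Γ(u) / (4·Γ(u + μ + 1/2)), where Γ is the real Gamma function. Then lim_{u → ∞} u·(1/2)·ln(C₁(u)/C₂(u)) = −(9 − 2α²)/(24(4 − α²)). -/
open Real Filter

/-- If `f` has nonnegative derivative on `[0,b]` then `f 0 ≤ f b`. -/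
lemma mono_tool {f f' : ℝ → ℝ} {b : ℝ} (hb : 0 ≤ b)
    (hd : ∀ x ∈ Set.Icc (0:ℝ) b, HasDerivAt f (f' x) x)
    (h' : ∀ x ∈ Set.Icc (0:ℝ) b, 0 ≤ f' x) : f 0 ≤ f b := by
  have hc : ContinuousOn f (Set.Icc 0 b) := fun x hx =>
    (hd x hx).continuousAt.continuousWithinAt
  have hint : interior (Set.Icc (0:ℝ) b) ⊆ Set.Icc 0 b := interior_subset
  have hdiff : DifferentiableOn ℝ f (interior (Set.Icc (0:ℝ) b)) :=
    fun x hx => ((hd x (hint hx)).differentiableAt).differentiableWithinAt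
  have hm := monotoneOn_of_deriv_nonneg (convex_Icc 0 b) hc hdiff
    (fun x hx => by rw [(hd x (hint hx)).deriv]; exact h' x (hint hx))
  exact hm (Set.left_mem_Icc.2 hb) (Set.right_mem_Icc.2 hb) hb

lemma log_ineq1 {y : ℝ} (h0 : 0 ≤ y) (h1 : y < 1) :
    2*y + 2/3*y^3 ≤ Real.log (1+y) - Real.log (1-y) := by
  set f : ℝ → ℝ := fun x => Real.log (1+x) - Real.log (1-x) - (2*x + 2/3*x^3) with hf
  set f' : ℝ → ℝ := fun x => 1/(1+x) - (-1)/(1-x) - (2 + 2/3*(3*x^2)) with hf'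
  have key : f 0 ≤ f y := by
    apply mono_tool h0
    · intro x hx
      have hx1 : (1:ℝ) + x ≠ 0 := by nlinarith [hx.1]
      have hx2 : (1:ℝ) - x ≠ 0 := by nlinarith [hx.2]
      have d1 : HasDerivAt (fun x : ℝ => Real.log (1+x)) (1/(1+x)) x := by
        simpa using (((hasDerivAt_id x).const_add (1:ℝ)).log hx1)
      have d2 : HasDerivAt (fun x : ℝ => Real.log (1-x)) ((-1)/(1-x)) x := by
        simpa using (((hasDerivAt_id x).const_sub (1:ℝ)).log hx2)
      have d3 : HasDerivAt (fun x : ℝ => 2*x + 2/3*x^3) (2 + 2/3*(3*x^2)) x := by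
        have := ((hasDerivAt_id x).const_mul (2:ℝ)).add ((hasDerivAt_pow 3 x).const_mul (2/3))
        simp at this; exact this
      exact (d1.sub d2).sub d3
    · intro x hx
      have hx1 : (0:ℝ) < 1 + x := by nlinarith [hx.1]
      have hx2 : (0:ℝ) < 1 - x := by nlinarith [hx.2]
      have key : 1/(1+x) - (-1)/(1-x) - (2 + 2/3*(3*x^2)) = 2*x^4/((1+x)*(1-x)) := by
        field_simp
        ring
      rw [key]
      positivity
  simp only [hf] at key
  norm_num at key
  linarith

lemma log_ineq2 {y : ℝ} (h0 : 0 ≤ y) (h1 : y < 1) :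
    Real.log (1+y) - Real.log (1-y) ≤ 2*y + 2/3*y^3/(1-y^2) := by
  set f : ℝ → ℝ := fun x => 2*x + 2/3*x^3/(1-x^2) - (Real.log (1+x) - Real.log (1-x)) with hf
  set f' : ℝ → ℝ := fun x =>
    2 + 2/3*((3*x^2*(1-x^2) - x^3*(-(2*x)))/(1-x^2)^2) - (1/(1+x) - (-1)/(1-x)) with hf'
  have key : f 0 ≤ f y := by
    apply mono_tool h0
    · intro x hx
      have hx1 : (1:ℝ) + x ≠ 0 := by nlinarith [hx.1]
      have hx2 : (1:ℝ) - x ≠ 0 := by nlinarith [hx.2]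
      have hx3 : (1:ℝ) - x^2 ≠ 0 := by nlinarith [hx.1, hx.2]
      have d1 : HasDerivAt (fun x : ℝ => Real.log (1+x)) (1/(1+x)) x := by
        simpa using (((hasDerivAt_id x).const_add (1:ℝ)).log hx1)
      have d2 : HasDerivAt (fun x : ℝ => Real.log (1-x)) ((-1)/(1-x)) x := by
        simpa using (((hasDerivAt_id x).const_sub (1:ℝ)).log hx2)
      have dq : HasDerivAt (fun x : ℝ => x^3/(1-x^2))
          ((3*x^2*(1-x^2) - x^3*(-(2*x)))/(1-x^2)^2) x := by
        have dden : HasDerivAt (fun x : ℝ => 1 - x^2) (-(2*x)) x := by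
          simpa using ((hasDerivAt_pow 2 x).const_sub (1:ℝ))
        have := (hasDerivAt_pow 3 x).div dden hx3
        simp at this ⊢; exact this
      have d3 : HasDerivAt (fun x : ℝ => 2*x + 2/3*x^3/(1-x^2))
          (2 + 2/3*((3*x^2*(1-x^2) - x^3*(-(2*x)))/(1-x^2)^2)) x := by
        have := ((hasDerivAt_id x).const_mul (2:ℝ)).add (dq.const_mul (2/3))
        simp [mul_div_assoc] at this ⊢; exact this
      exact d3.sub (d1.sub d2)
    · intro x hx
      have hx1 : (0:ℝ) < 1 + x := by nlinarith [hx.1]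
      have hx2 : (0:ℝ) < 1 - x := by nlinarith [hx.2]
      have key : 2 + 2/3*((3*x^2*(1-x^2) - x^3*(-(2*x)))/(1-x^2)^2) - (1/(1+x) - (-1)/(1-x))
          = 4/3*x^4/((1-x^2)^2) := by
        have hx3 : (1:ℝ) - x^2 ≠ 0 := by nlinarith
        field_simp
        ring
      rw [key]
      positivity
  simp only [hf] at key
  norm_num at key
  linarith

lemma log_ineq3 {t : ℝ} (h : 0 ≤ t) : t - t^2/2 ≤ Real.log (1+t) := by
  set f : ℝ → ℝ := fun x => Real.log (1+x) - (x - x^2/2) with hf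
  have key : f 0 ≤ f t := by
    apply mono_tool h (f' := fun x => 1/(1+x) - (1 - 2*x/2))
    · intro x hx
      have hx1 : (1:ℝ) + x ≠ 0 := by nlinarith [hx.1]
      have d1 : HasDerivAt (fun x : ℝ => Real.log (1+x)) (1/(1+x)) x := by
        simpa using (((hasDerivAt_id x).const_add (1:ℝ)).log hx1)
      have d2 : HasDerivAt (fun x : ℝ => x - x^2/2) (1 - 2*x/2) x := by
        have := (hasDerivAt_id x).sub ((hasDerivAt_pow 2 x).div_const 2)
        simp at this ⊢; exact this
      exact d1.sub d2
    · intro x hx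
      have hx1 : (0:ℝ) < 1 + x := by nlinarith [hx.1]
      have key : 1/(1+x) - (1 - 2*x/2) = x^2/(1+x) := by field_simp; ring
      rw [key]
      positivity
  simp only [hf] at key
  norm_num at key
  linarith

lemma log_ineq4 {t : ℝ} (h : 0 ≤ t) : Real.log (1+t) ≤ t - t^2/2 + t^3/3 := by
  set f : ℝ → ℝ := fun x => x - x^2/2 + x^3/3 - Real.log (1+x) with hf
  have key : f 0 ≤ f t := by
    apply mono_tool h (f' := fun x => 1 - 2*x/2 + 3*x^2/3 - 1/(1+x))
    · intro x hx
      have hx1 : (1:ℝ) + x ≠ 0 := by nlinarith [hx.1]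
      have d1 : HasDerivAt (fun x : ℝ => Real.log (1+x)) (1/(1+x)) x := by
        simpa using (((hasDerivAt_id x).const_add (1:ℝ)).log hx1)
      have d2 : HasDerivAt (fun x : ℝ => x - x^2/2 + x^3/3) (1 - 2*x/2 + 3*x^2/3) x := by
        have := ((hasDerivAt_id x).sub ((hasDerivAt_pow 2 x).div_const 2)).add
          ((hasDerivAt_pow 3 x).div_const 3)
        simp at this ⊢; exact this
      exact d2.sub d1
    · intro x hx
      have hx1 : (0:ℝ) < 1 + x := by nlinarith [hx.1]
      have key : 1 - 2*x/2 + 3*x^2/3 - 1/(1+x) = x^3/(1+x) := by field_simp; ring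
      rw [key]
      exact div_nonneg (pow_nonneg hx.1 3) hx1.le
  simp only [hf] at key
  norm_num at key
  linarith



noncomputable def Bfun (x : ℝ) : ℝ :=
  Real.log (Real.Gamma x) - (x - 1/2) * Real.log x + x - (1/2) * Real.log (2*π)

noncomputable def gfun (x : ℝ) : ℝ :=
  (x + 1/2) * (Real.log (x+1) - Real.log x) - 1

lemma Bfun_rec {x : ℝ} (hx : 0 < x) : Bfun x = gfun x + Bfun (x+1) := by
  have hg : Real.Gamma (x+1) = x * Real.Gamma x := Real.Gamma_add_one (ne_of_gt hx)
  have hG : 0 < Real.Gamma x := Real.Gamma_pos_of_pos hx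
  unfold Bfun gfun
  rw [hg, Real.log_mul (ne_of_gt hx) (ne_of_gt hG)]
  ring

lemma Gamma_prod {x : ℝ} (hx : 0 < x) (n : ℕ) :
    Real.Gamma (x + n) = Real.Gamma x * ∏ j ∈ Finset.range n, (x + j) := by
  induction n with
  | zero => simp
  | succ n ih =>
    have hxn : x + (n:ℝ) ≠ 0 := by positivity
    have h1 : x + ((n:ℕ)+1:ℕ) = (x + n) + 1 := by push_cast; ring
    rw [h1, Real.Gamma_add_one hxn, ih, Finset.prod_range_succ]
    ring

lemma Bfun_tendsto_nat {x : ℝ} (hx : 0 < x) :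
    Tendsto (fun n : ℕ => Bfun (x + n)) atTop (nhds 0) := by
  have hGx : (0:ℝ) < Real.Gamma x := Real.Gamma_pos_of_pos hx
  -- the ratio Γ(x+n+1)/(n^x n!) tends to 1
  have hr : Tendsto (fun n : ℕ => Real.Gamma (x + n + 1) / ((n:ℝ) ^ x * ((Nat.factorial n : ℕ):ℝ))) atTop (nhds 1) := by
    have h1 : Tendsto (fun n : ℕ => Real.Gamma x / Real.GammaSeq x n) atTop
        (nhds (Real.Gamma x / Real.Gamma x)) :=
      Tendsto.div tendsto_const_nhds (Real.GammaSeq_tendsto_Gamma x) (ne_of_gt hGx)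
    rw [div_self (ne_of_gt hGx)] at h1
    apply h1.congr'
    filter_upwards [eventually_ge_atTop 1] with n hn
    have hn0 : (0:ℝ) < (n:ℝ) := by exact_mod_cast hn
    have hprod : (0:ℝ) < ∏ j ∈ Finset.range (n+1), (x + j) :=
      Finset.prod_pos (fun j _ => by positivity)
    have hgam : Real.Gamma (x + n + 1) = Real.Gamma x * ∏ j ∈ Finset.range (n+1), (x + j) := by
      have := Gamma_prod hx (n+1)
      rw [show x + ((n:ℕ)+1:ℕ) = x + n + 1 by push_cast; ring] at this
      exact this
    rw [Real.GammaSeq, hgam, div_div_eq_mul_div]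
  have hlogr : Tendsto (fun n : ℕ => Real.log (Real.Gamma (x + n + 1) / ((n:ℝ) ^ x * ((Nat.factorial n : ℕ):ℝ))))
      atTop (nhds 0) := by
    have := ((Real.continuousAt_log one_ne_zero).tendsto).comp hr
    simp at this; exact this
  -- Stirling for n!
  have hs : Tendsto (fun n : ℕ => Real.log (Stirling.stirlingSeq n)) atTop
      (nhds (Real.log (Real.sqrt π))) := by
    have hpi : Real.sqrt π ≠ 0 := by positivity
    exact ((Real.continuousAt_log hpi).tendsto).comp Stirling.tendsto_stirlingSeq_sqrt_pi
  -- elementary limit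
  have hR : Tendsto (fun n : ℕ =>
      (x + n + 1/2) * (Real.log n - Real.log (x + n + 1)) + (x+1)) atTop (nhds 0) := by
    have hb1 : Tendsto (fun v : ℝ => v * Real.log (1 + (x+1)/v)) atTop (nhds (x+1)) :=
      Real.tendsto_mul_log_one_add_div_atTop (x+1)
    have hl0 : Tendsto (fun v : ℝ => Real.log (1 + (x+1)/v)) atTop (nhds 0) := by
      have h2 : Tendsto (fun v : ℝ => 1 + (x+1)/v) atTop (nhds 1) := by
        simpa using tendsto_const_nhds.add ((tendsto_const_nhds (x := (x+1))).div_atTop tendsto_id)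
      have := ((Real.continuousAt_log one_ne_zero).tendsto).comp h2
      simp at this; exact this
    have hb2 : Tendsto (fun v : ℝ => -((v + (x+1/2)) * Real.log (1 + (x+1)/v)) + (x+1))
        atTop (nhds 0) := by
      have := ((hb1.add (hl0.const_mul (x+1/2))).neg).add (tendsto_const_nhds (x := x+1))
      have e : -((x+1) + (x+1/2)*0) + (x+1) = 0 := by ring
      rw [e] at this
      apply this.congr
      intro v
      ring
    have hcomp := hb2.comp (tendsto_natCast_atTop_atTop (R := ℝ))
    apply hcomp.congr'
    filter_upwards [eventually_ge_atTop 1] with n hn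
    have hn0 : (0:ℝ) < (n:ℝ) := by exact_mod_cast hn
    have he : 1 + (x+1)/(n:ℝ) = (x + n + 1)/(n:ℝ) := by field_simp; ring
    simp only [Function.comp_apply]
    rw [he, Real.log_div (by positivity) (ne_of_gt hn0)]
    ring
  -- combine
  rw [← tendsto_add_atTop_iff_nat 1]
  have hmain : Tendsto (fun n : ℕ =>
      Real.log (Real.Gamma (x + n + 1) / ((n:ℝ) ^ x * ((Nat.factorial n : ℕ):ℝ)))
      + (Real.log (Stirling.stirlingSeq n) - Real.log (Real.sqrt π))
      + ((x + n + 1/2) * (Real.log n - Real.log (x + n + 1)) + (x+1))) atTop (nhds 0) := by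
    have := (hlogr.add (hs.sub (tendsto_const_nhds (x := Real.log (Real.sqrt π))))).add hR
    simpa using this
  apply hmain.congr'
  filter_upwards [eventually_ge_atTop 1] with n hn
  have hn0 : (0:ℝ) < (n:ℝ) := by exact_mod_cast hn
  have hfac : (0:ℝ) < ((Nat.factorial n : ℕ):ℝ) := by exact_mod_cast Nat.factorial_pos n
  have hxn1 : (0:ℝ) < x + n + 1 := by positivity
  have hG : (0:ℝ) < Real.Gamma (x + n + 1) := Real.Gamma_pos_of_pos (by positivity)
  have hnx : (0:ℝ) < (n:ℝ) ^ x := Real.rpow_pos_of_pos hn0 x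
  -- log of the ratio
  have e1 : Real.log (Real.Gamma (x + n + 1) / ((n:ℝ) ^ x * ((Nat.factorial n : ℕ):ℝ)))
      = Real.log (Real.Gamma (x + n + 1)) - (x * Real.log n + Real.log (((Nat.factorial n : ℕ):ℝ))) := by
    rw [Real.log_div (ne_of_gt hG) (by positivity), Real.log_mul (ne_of_gt hnx) (ne_of_gt hfac),
      Real.log_rpow hn0]
  -- log of stirlingSeq
  have e2 : Real.log (Stirling.stirlingSeq n)
      = Real.log (((Nat.factorial n : ℕ):ℝ)) - (1/2*(Real.log 2 + Real.log n) + n*(Real.log n - 1)) := by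
    rw [Stirling.stirlingSeq]
    rw [Real.log_div (ne_of_gt hfac) (by positivity),
      Real.log_mul (by positivity) (by positivity), Real.log_pow,
      Real.log_div (ne_of_gt hn0) (by positivity),
      Real.log_sqrt (by positivity), Real.log_mul two_ne_zero (ne_of_gt hn0),
      Real.log_exp]
    push_cast
    ring
  have e3 : Real.log (Real.sqrt π) = 1/2 * Real.log π := by
    rw [Real.log_sqrt Real.pi_pos.le]; ring
  have e4 : Real.log (2*π) = Real.log 2 + Real.log π :=
    Real.log_mul two_ne_zero Real.pi_ne_zero
  have ecast : x + ((n:ℕ)+1:ℕ) = x + n + 1 := by push_cast; ring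
  rw [ecast]
  unfold Bfun
  rw [e1, e2, e3, e4]
  ring


lemma gfun_lower {x : ℝ} (hx : 0 < x) :
    1/(12*(x+1)) - 1/(12*(x+2)) ≤ gfun x := by
  set y := 1/(2*x+1) with hy
  have h2x : (0:ℝ) < 2*x+1 := by linarith
  have h0y : 0 < y := by positivity
  have h1y : y < 1 := by rw [hy, div_lt_one h2x]; linarith
  have e1 : 1 + y = (2*x+2)/(2*x+1) := by rw [hy]; field_simp; ring
  have e2 : 1 - y = (2*x)/(2*x+1) := by rw [hy]; field_simp; ring
  have hlog : Real.log (1+y) - Real.log (1-y) = Real.log (x+1) - Real.log x := by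
    rw [e1, e2, Real.log_div (by positivity) (by positivity),
        Real.log_div (by positivity) (by positivity),
        show (2*x+2:ℝ) = 2*(x+1) by ring,
        Real.log_mul two_ne_zero (by positivity),
        Real.log_mul two_ne_zero (ne_of_gt hx)]
    ring
  have hI := log_ineq1 h0y.le h1y
  have hmul := mul_le_mul_of_nonneg_left hI (by positivity : (0:ℝ) ≤ x + 1/2)
  rw [hlog] at hmul
  have hval : (x+1/2)*(2*y + 2/3*y^3) = 1 + 1/(3*(2*x+1)^2) := by
    rw [hy]; field_simp
  rw [hval] at hmul
  have hfin : 1/(12*(x+1)) - 1/(12*(x+2)) ≤ 1/(3*(2*x+1)^2) := by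
    rw [show 1/(12*(x+1)) - 1/(12*(x+2)) = 1/(12*(x+1)*(x+2)) by field_simp; ring]
    apply one_div_le_one_div_of_le (by positivity)
    nlinarith
  unfold gfun
  linarith

lemma gfun_upper {x : ℝ} (hx : 0 < x) :
    gfun x ≤ 1/(12*x) - 1/(12*(x+1)) := by
  set y := 1/(2*x+1) with hy
  have h2x : (0:ℝ) < 2*x+1 := by linarith
  have h0y : 0 < y := by positivity
  have h1y : y < 1 := by rw [hy, div_lt_one h2x]; linarith
  have e1 : 1 + y = (2*x+2)/(2*x+1) := by rw [hy]; field_simp; ring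
  have e2 : 1 - y = (2*x)/(2*x+1) := by rw [hy]; field_simp; ring
  have hlog : Real.log (1+y) - Real.log (1-y) = Real.log (x+1) - Real.log x := by
    rw [e1, e2, Real.log_div (by positivity) (by positivity),
        Real.log_div (by positivity) (by positivity),
        show (2*x+2:ℝ) = 2*(x+1) by ring,
        Real.log_mul two_ne_zero (by positivity),
        Real.log_mul two_ne_zero (ne_of_gt hx)]
    ring
  have hI := log_ineq2 h0y.le h1y
  have hmul := mul_le_mul_of_nonneg_left hI (by positivity : (0:ℝ) ≤ x + 1/2)
  rw [hlog] at hmul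
  have hyy : (0:ℝ) < 1 - y^2 := by nlinarith
  have hval : (x+1/2)*(2*y + 2/3*y^3/(1-y^2)) = 1 + 1/(12*x*(x+1)) := by
    rw [hy]
    rw [show (1:ℝ) - (1/(2*x+1))^2 = (4*x^2+4*x)/((2*x+1)^2) by field_simp; ring]
    field_simp
    ring
  rw [hval] at hmul
  have hfin : 1/(12*x*(x+1)) = 1/(12*x) - 1/(12*(x+1)) := by field_simp; ring
  unfold gfun
  linarith [hfin ▸ hmul]

lemma Bfun_sum {x : ℝ} (hx : 0 < x) (n : ℕ) :
    Bfun x = (∑ k ∈ Finset.range n, gfun (x + k)) + Bfun (x + n) := by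
  induction n with
  | zero => simp
  | succ n ih =>
    rw [ih, Finset.sum_range_succ, show x + ((n:ℕ)+1:ℕ) = (x + n) + 1 by push_cast; ring,
        Bfun_rec (by positivity : (0:ℝ) < x + n)]
    ring

lemma tendsto_shift_zero {x : ℝ} (hx : 0 < x) :
    Tendsto (fun n : ℕ => 1/(12*(x+(n:ℝ)))) atTop (nhds 0) := by
  have h1 : Tendsto (fun n : ℕ => 12*(x+(n:ℝ))) atTop atTop := by
    apply Tendsto.const_mul_atTop (by norm_num : (0:ℝ) < 12)
    exact tendsto_atTop_add_const_left atTop x (tendsto_natCast_atTop_atTop (R := ℝ))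
  apply (tendsto_inv_atTop_zero.comp h1).congr
  intro n
  exact (one_div _).symm

lemma Bfun_bounds {x : ℝ} (hx : 0 < x) :
    1/(12*(x+1)) ≤ Bfun x ∧ Bfun x ≤ 1/(12*x) := by
  have htend := Bfun_tendsto_nat hx
  constructor
  · have hlow : ∀ n : ℕ, 1/(12*(x+1)) - 1/(12*(x+(n:ℝ)+1)) + Bfun (x+n) ≤ Bfun x := by
      intro n
      have hsum := Bfun_sum hx n
      have htel : ∀ m : ℕ, ∑ k ∈ Finset.range m, (1/(12*(x+(k:ℝ)+1)) - 1/(12*(x+(k:ℝ)+2)))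
          = 1/(12*(x+1)) - 1/(12*(x+(m:ℝ)+1)) := by
        intro m
        induction m with
        | zero => simp
        | succ m ih => rw [Finset.sum_range_succ, ih]; push_cast; ring
      have hbd : ∑ k ∈ Finset.range n, (1/(12*(x+(k:ℝ)+1)) - 1/(12*(x+(k:ℝ)+2)))
          ≤ ∑ k ∈ Finset.range n, gfun (x+k) :=
        Finset.sum_le_sum (fun k _ => by
          have h := gfun_lower (x := x + k) (by positivity)
          convert h using 2 <;> ring)
      rw [htel n] at hbd
      linarith
    have hL : Tendsto (fun n : ℕ => 1/(12*(x+1)) - 1/(12*(x+(n:ℝ)+1)) + Bfun (x+n)) atTop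
        (nhds (1/(12*(x+1)))) := by
      have hz : Tendsto (fun n : ℕ => 1/(12*(x+(n:ℝ)+1))) atTop (nhds 0) := by
        apply (tendsto_shift_zero (x := x+1) (by positivity)).congr
        intro n
        ring_nf
      have h2 := ((tendsto_const_nhds (x := 1/(12*(x+1)))).sub hz).add htend
      rw [sub_zero, add_zero] at h2
      exact h2
    exact le_of_tendsto hL (Eventually.of_forall hlow)
  · have hup : ∀ n : ℕ, Bfun x ≤ 1/(12*x) - 1/(12*(x+(n:ℝ))) + Bfun (x+n) := by
      intro n
      have hsum := Bfun_sum hx n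
      have htel : ∀ m : ℕ, ∑ k ∈ Finset.range m, (1/(12*(x+(k:ℝ))) - 1/(12*(x+(k:ℝ)+1)))
          = 1/(12*x) - 1/(12*(x+(m:ℝ))) := by
        intro m
        induction m with
        | zero => simp
        | succ m ih => rw [Finset.sum_range_succ, ih]; push_cast; ring
      have hbd : ∑ k ∈ Finset.range n, gfun (x+k)
          ≤ ∑ k ∈ Finset.range n, (1/(12*(x+(k:ℝ))) - 1/(12*(x+(k:ℝ)+1))) :=
        Finset.sum_le_sum (fun k _ => by
          have h := gfun_upper (x := x + k) (by positivity)
          convert h using 2 <;> ring)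
      rw [htel n] at hbd
      linarith
    have hU : Tendsto (fun n : ℕ => 1/(12*x) - 1/(12*(x+(n:ℝ))) + Bfun (x+n)) atTop
        (nhds (1/(12*x))) := by
      have hz := tendsto_shift_zero hx
      have h2 := ((tendsto_const_nhds (x := 1/(12*x))).sub hz).add htend
      rw [sub_zero, add_zero] at h2
      exact h2
    exact ge_of_tendsto hU (Eventually.of_forall hup)

lemma xB_tendsto : Tendsto (fun x : ℝ => x * Bfun x) atTop (nhds (1/12)) := by
  have hg : Tendsto (fun x : ℝ => x/(12*(x+1))) atTop (nhds (1/12)) := by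
    have hz : Tendsto (fun x : ℝ => 1/(x+1)) atTop (nhds 0) := by
      have h1 : Tendsto (fun x : ℝ => x + 1) atTop atTop :=
        tendsto_atTop_add_const_right atTop (1:ℝ) tendsto_id
      apply (tendsto_inv_atTop_zero.comp h1).congr
      intro n
      exact (one_div _).symm
    have h1 := ((tendsto_const_nhds (x := (1:ℝ))).sub hz).const_mul (1/12 : ℝ)
    rw [sub_zero, mul_one] at h1
    apply h1.congr'
    filter_upwards [eventually_gt_atTop 0] with x hx
    field_simp
    ring
  have hh : Tendsto (fun _ : ℝ => (1:ℝ)/12) atTop (nhds (1/12)) := tendsto_const_nhds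
  apply tendsto_of_tendsto_of_tendsto_of_le_of_le' hg hh
  · filter_upwards [eventually_gt_atTop 0] with x hx
    have h := (Bfun_bounds hx).1
    calc x/(12*(x+1)) = x * (1/(12*(x+1))) := by ring
    _ ≤ x * Bfun x := mul_le_mul_of_nonneg_left h hx.le
  · filter_upwards [eventually_gt_atTop 0] with x hx
    have h := (Bfun_bounds hx).2
    calc x * Bfun x ≤ x * (1/(12*x)) := mul_le_mul_of_nonneg_left h hx.le
    _ = 1/12 := by field_simp

lemma xlog_tendsto :
    Tendsto (fun x : ℝ => x * (x * Real.log (1+1/x) - 1)) atTop (nhds (-(1/2))) := by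
  have hg : Tendsto (fun _ : ℝ => -(1/2 : ℝ)) atTop (nhds (-(1/2))) := tendsto_const_nhds
  have hh : Tendsto (fun x : ℝ => -(1/2) + 1/(3*x)) atTop (nhds (-(1/2))) := by
    have hz : Tendsto (fun x : ℝ => 1/(3*x)) atTop (nhds 0) := by
      have h1 : Tendsto (fun x : ℝ => 3*x) atTop atTop :=
        Tendsto.const_mul_atTop (by norm_num : (0:ℝ) < 3) tendsto_id
      apply (tendsto_inv_atTop_zero.comp h1).congr
      intro n
      exact (one_div _).symm
    have h1 := (tendsto_const_nhds (x := -(1/2:ℝ))).add hz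
    rw [add_zero] at h1
    exact h1
  apply tendsto_of_tendsto_of_tendsto_of_le_of_le' hg hh
  · filter_upwards [eventually_ge_atTop 1] with x hx
    have hx0 : (0:ℝ) < x := lt_of_lt_of_le one_pos hx
    have ht := log_ineq3 (t := 1/x) (by positivity)
    rw [show (1:ℝ)/x - (1/x)^2/2 = (2*x-1)/(2*x^2) by field_simp] at ht
    have h3 : x - 1/2 ≤ x^2 * Real.log (1+1/x) := by
      calc x - 1/2 = x^2*((2*x-1)/(2*x^2)) := by field_simp
      _ ≤ x^2 * Real.log (1+1/x) := mul_le_mul_of_nonneg_left ht (sq_nonneg x)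
    nlinarith [h3]
  · filter_upwards [eventually_ge_atTop 1] with x hx
    have hx0 : (0:ℝ) < x := lt_of_lt_of_le one_pos hx
    have ht := log_ineq4 (t := 1/x) (by positivity)
    rw [show (1:ℝ)/x - (1/x)^2/2 + (1/x)^3/3 = (6*x^2-3*x+2)/(6*x^3) by field_simp; ring] at ht
    have h3 : x^2 * Real.log (1+1/x) ≤ x - 1/2 + 1/(3*x) := by
      calc x^2 * Real.log (1+1/x) ≤ x^2*((6*x^2-3*x+2)/(6*x^3)) :=
        mul_le_mul_of_nonneg_left ht (sq_nonneg x)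
      _ = x - 1/2 + 1/(3*x) := by field_simp; ring
    nlinarith [h3]


/-- The leading connection coefficient d₁(α): with μ = (1−α²/2)u,
    u·(1/2)ln(C₁(u)/C₂(u)) → −(9−2α²)/(24(4−α²)) as u → ∞. -/
theorem stmt_19 (α : ℝ) (hα : 0 < α) (hα2 : α < Real.sqrt 2)
    (μ C₁ C₂ : ℝ → ℝ)
    (hμ : ∀ u : ℝ, μ u = (1 - α ^ 2 / 2) * u)
    (hC₁ : ∀ u : ℝ, C₁ u = 2 ^ ((3 : ℝ) / 4) * Real.sqrt π * Real.exp ((μ u - u) / 2) *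
        u ^ (u - 3 / 4) * (u + μ u) ^ (-(u + μ u) / 2) / (4 * Real.Gamma u))
    (hC₂ : ∀ u : ℝ, C₂ u = 2 ^ ((1 : ℝ) / 4) * Real.exp ((u - μ u) / 2) *
        u ^ (1 / 4 - u) * (u + μ u) ^ ((u + μ u) / 2) * Real.Gamma u /
          (4 * Real.Gamma (u + μ u + 1 / 2))) :
    Filter.Tendsto (fun u : ℝ => u * ((1 / 2) * Real.log (C₁ u / C₂ u)))
      Filter.atTop (nhds (-(9 - 2 * α ^ 2) / (24 * (4 - α ^ 2)))) := by
  have hs2 : (0:ℝ) ≤ 2 := by norm_num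
  have hα2sq : α^2 < 2 := by
    have h1 : α^2 < (Real.sqrt 2)^2 := by nlinarith [Real.sqrt_nonneg 2]
    rwa [Real.sq_sqrt hs2] at h1
  set β : ℝ := 2 - α^2/2 with hβdef
  have hβ : 0 < β := by rw [hβdef]; nlinarith
  -- key identity
  have hkey : ∀ u : ℝ, 1 ≤ u → u * ((1/2) * Real.log (C₁ u / C₂ u)) =
      u/2 * Bfun (β*u+1/2) - u * Bfun u
      + u/4 * (2*β*u * Real.log (1+1/(2*β*u)) - 1) := by
    intro u hu
    have hu0 : (0:ℝ) < u := lt_of_lt_of_le one_pos hu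
    have hβu : (0:ℝ) < β*u := mul_pos hβ hu0
    have hβu2 : (0:ℝ) < β*u+1/2 := add_pos hβu one_half_pos
    have hGu : (0:ℝ) < Real.Gamma u := Real.Gamma_pos_of_pos hu0
    have hGβ : (0:ℝ) < Real.Gamma (β*u+1/2) := Real.Gamma_pos_of_pos hβu2
    have hsπ : (0:ℝ) < Real.sqrt π := Real.sqrt_pos.mpr Real.pi_pos
    have hsum : u + μ u = β*u := by rw [hμ u, hβdef]; ring
    have hC1 : C₁ u = 2 ^ ((3 : ℝ) / 4) * Real.sqrt π * Real.exp (((1 - α^2/2)*u - u) / 2) *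
        u ^ (u - 3 / 4) * (β*u) ^ (-(β*u) / 2) / (4 * Real.Gamma u) := by
      rw [hC₁ u, hsum, hμ u]
    have hC2 : C₂ u = 2 ^ ((1 : ℝ) / 4) * Real.exp ((u - (1 - α^2/2)*u) / 2) *
        u ^ (1 / 4 - u) * (β*u) ^ ((β*u) / 2) * Real.Gamma u /
          (4 * Real.Gamma (β*u + 1 / 2)) := by
      rw [hC₂ u, hsum, hμ u]
    have hC1e : C₁ u = Real.exp (Real.log 2 * (3/4) + Real.log (Real.sqrt π)
        + ((1 - α^2/2)*u - u)/2 + Real.log u * (u - 3/4) + Real.log (β*u) * (-(β*u)/2)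
        - Real.log (4 * Real.Gamma u)) := by
      rw [hC1, Real.rpow_def_of_pos (by norm_num : (0:ℝ) < 2),
        Real.rpow_def_of_pos hu0, Real.rpow_def_of_pos hβu,
        ← Real.exp_log hsπ,
        ← Real.exp_log (show (0:ℝ) < 4 * Real.Gamma u by positivity)]
      simp only [← Real.exp_add, ← Real.exp_sub, Real.log_exp]
    have hC2e : C₂ u = Real.exp (Real.log 2 * (1/4) + (u - (1 - α^2/2)*u)/2
        + Real.log u * (1/4 - u) + Real.log (β*u) * ((β*u)/2) + Real.log (Real.Gamma u)
        - Real.log (4 * Real.Gamma (β*u + 1/2))) := by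
      rw [hC2, Real.rpow_def_of_pos (by norm_num : (0:ℝ) < 2),
        Real.rpow_def_of_pos hu0, Real.rpow_def_of_pos hβu,
        ← Real.exp_log hGu,
        ← Real.exp_log (show (0:ℝ) < 4 * Real.Gamma (β*u + 1/2) by positivity)]
      simp only [← Real.exp_add, ← Real.exp_sub, Real.log_exp]
    have hlogratio : Real.log (C₁ u / C₂ u) =
        (Real.log 2 * (3/4) + Real.log (Real.sqrt π)
        + ((1 - α^2/2)*u - u)/2 + Real.log u * (u - 3/4) + Real.log (β*u) * (-(β*u)/2)
        - Real.log (4 * Real.Gamma u))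
        - (Real.log 2 * (1/4) + (u - (1 - α^2/2)*u)/2
        + Real.log u * (1/4 - u) + Real.log (β*u) * ((β*u)/2) + Real.log (Real.Gamma u)
        - Real.log (4 * Real.Gamma (β*u + 1/2))) := by
      rw [hC1e, hC2e, ← Real.exp_sub, Real.log_exp]
    have hlog4G1 : Real.log (4 * Real.Gamma u) = 2*Real.log 2 + Real.log (Real.Gamma u) := by
      rw [Real.log_mul (by norm_num) (ne_of_gt hGu),
        show (4:ℝ) = 2^(2:ℕ) by norm_num, Real.log_pow]
      push_cast; ring
    have hlog4G2 : Real.log (4 * Real.Gamma (β*u+1/2))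
        = 2*Real.log 2 + Real.log (Real.Gamma (β*u+1/2)) := by
      rw [Real.log_mul (by norm_num) (ne_of_gt hGβ),
        show (4:ℝ) = 2^(2:ℕ) by norm_num, Real.log_pow]
      push_cast; ring
    have hL : Real.log (1+1/(2*β*u)) = Real.log (β*u+1/2) - Real.log (β*u) := by
      rw [show (1:ℝ)+1/(2*β*u) = (β*u+1/2)/(β*u) by field_simp,
        Real.log_div (ne_of_gt hβu2) (ne_of_gt hβu)]
    rw [hlogratio]
    simp only [Bfun]
    rw [hlog4G1, hlog4G2, Real.log_sqrt Real.pi_pos.le,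
      Real.log_mul two_ne_zero Real.pi_ne_zero, hL, hβdef]
    ring
  -- limits
  have hT1 : Tendsto (fun u : ℝ => u/2 * Bfun (β*u+1/2)) atTop (nhds (1/(24*β))) := by
    have hcomp : Tendsto (fun u : ℝ => β*u+1/2) atTop atTop := by
      have h1 : Tendsto (fun u : ℝ => β*u) atTop atTop :=
        Tendsto.const_mul_atTop hβ tendsto_id
      exact tendsto_atTop_add_const_right atTop _ h1
    have hA : Tendsto (fun u : ℝ => (β*u+1/2) * Bfun (β*u+1/2)) atTop (nhds (1/12)) := by
      have := xB_tendsto.comp hcomp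
      apply this.congr
      intro u
      simp [Function.comp]
    have hB : Tendsto (fun u : ℝ => u/(2*(β*u+1/2))) atTop (nhds (1/(2*β))) := by
      have hz : Tendsto (fun u : ℝ => 1/u) atTop (nhds 0) := by
        apply tendsto_inv_atTop_zero.congr
        intro u
        exact (one_div _).symm
      have hd : Tendsto (fun u : ℝ => 2*β+1/u) atTop (nhds (2*β+0)) :=
        tendsto_const_nhds.add hz
      rw [add_zero] at hd
      have hB1 := (tendsto_const_nhds (x := (1:ℝ))).div hd (by positivity)
      have hval : (1:ℝ)/(2*β) = 1/(2*β) := rfl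
      apply hB1.congr'
      filter_upwards [eventually_ge_atTop 1] with u hu
      have hu0 : (0:ℝ) < u := lt_of_lt_of_le one_pos hu
      have hβu2 : (0:ℝ) < β*u+1/2 := add_pos (mul_pos hβ hu0) one_half_pos
      simp only [Pi.div_apply]
      rw [show 2*β+1/u = (2*(β*u+1/2))/u from by field_simp, one_div_div]
    have hprod := hA.mul hB
    rw [show (1:ℝ)/12 * (1/(2*β)) = 1/(24*β) by field_simp; ring] at hprod
    apply hprod.congr'
    filter_upwards [eventually_ge_atTop 1] with u hu
    have hu0 : (0:ℝ) < u := lt_of_lt_of_le one_pos hu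
    have hβu2 : (0:ℝ) < β*u+1/2 := add_pos (mul_pos hβ hu0) one_half_pos
    field_simp [hβu2.ne']
  have hT3 : Tendsto (fun u : ℝ => u/4 * (2*β*u * Real.log (1+1/(2*β*u)) - 1)) atTop
      (nhds (-(1/(16*β)))) := by
    have hcomp : Tendsto (fun u : ℝ => 2*β*u) atTop atTop := by
      have : (0:ℝ) < 2*β := by positivity
      have h1 := Tendsto.const_mul_atTop this (tendsto_id (α := ℝ) (x := atTop))
      apply h1.congr
      intro u
      simp
    have h2 := (xlog_tendsto.comp hcomp).const_mul (1/(8*β))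
    rw [show (1:ℝ)/(8*β) * -(1/2) = -(1/(16*β)) by field_simp; ring] at h2
    apply h2.congr
    intro u
    simp only [Function.comp_apply]
    field_simp
    ring
  have hfinal := (hT1.sub xB_tendsto).add hT3
  have hval : 1/(24*β) - 1/12 + -(1/(16*β)) = -(9 - 2*α^2)/(24*(4 - α^2)) := by
    have hgen : ∀ A : ℝ, A ≠ 0 → 1/(24*A) - 1/12 + -(1/(16*A)) = -(1+4*A)/(48*A) := by
      intro A hA
      field_simp
      ring
    rw [hgen β hβ.ne', hβdef, div_eq_div_iff (ne_of_gt (show (0:ℝ) < 48*(2-α^2/2) by nlinarith))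
      (ne_of_gt (show (0:ℝ) < 24*(4-α^2) by nlinarith))]
    ring
  rw [hval] at hfinal
  apply hfinal.congr'
  filter_upwards [eventually_ge_atTop 1] with u hu
  exact (hkey u hu).symm
end
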